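/- arXiv:2604.12840 — 4 statements merged into one kernel-verified Lean document; each statement's English description precedes it below -/
import Mathlib

section
/- Under Assumptions A1 (continuity and compactness), A2 (strict dissipativity), A3 (terminal conditions) and A4 (terminal cost on orbit), the rotated stage cost and rotated terminal cost vanish on the optimal periodic orbit: ℓ̃(x,u) = 0 and Ṽ_f(x) = 0 for all (x,u) = Π*(i) with i ∈ {0,...,p*−1}. -/
open Filter Topology

section EMPCDefs

variable {E F : Type*} [NormedAddCommGroup E] [NormedAddCommGroup F]

/-- State trajectory `x_u(k, x₀)` of the system `x⁺ = f(x, u)` under input sequence `u`. -/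
def traj (f : E × F → E) (x : E) (u : ℕ → F) : ℕ → E
  | 0 => x
  | k + 1 => f (traj f x u k, u k)

/-- `u ∈ U^N(x)`: input sequences of length `N` keeping the state in `X`. -/
def FeasN (f : E × F → E) (X : Set E) (U : Set F) (x : E) (N : ℕ) (u : ℕ → F) : Prop :=
  (∀ k < N, u k ∈ U) ∧ ∀ k ≤ N, traj f x u k ∈ X

/-- `u ∈ U^∞(x)`: infinite input sequences keeping the state in `X`. -/
def FeasInf (f : E × F → E) (X : Set E) (U : Set F) (x : E) (u : ℕ → F) : Prop :=
  (∀ k, u k ∈ U) ∧ ∀ k, traj f x u k ∈ X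

/-- The feasible set `X_N` of the terminal-constrained problem. -/
def XN (f : E × F → E) (X : Set E) (U : Set F) (Xf : Set E) (N : ℕ) : Set E :=
  {x | ∃ u : ℕ → F, FeasN f X U x N u ∧ traj f x u N ∈ Xf}

/-- The feasible set `X_∞`. -/
def XInf (f : E × F → E) (X : Set E) (U : Set F) : Set E :=
  {x | ∃ u : ℕ → F, FeasInf f X U x u}

/-- Distance `‖(x,u)‖_Π` of a state-input pair to a `p`-periodic orbit `Π = (i ↦ P i)`. -/
noncomputable def distOrbit (p : ℕ) (P : ℕ → E × F) (z : E × F) : ℝ :=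
  ⨅ i : Fin p, ‖z - P ↑i‖

/-- Distance `‖x‖_{Π_X}` of a state to the state part of a `p`-periodic orbit. -/
noncomputable def distOrbitX (p : ℕ) (PX : ℕ → E) (x : E) : ℝ :=
  ⨅ i : Fin p, ‖x - PX ↑i‖

/-- `Π = (Π_X, Π_U)` (given on `{0, …, p-1}`) is a feasible `p`-periodic orbit. -/
def FeasOrbit (f : E × F → E) (X : Set E) (U : Set F) (p : ℕ)
    (PX : ℕ → E) (PU : ℕ → F) : Prop :=
  (∀ i < p, PX i ∈ X) ∧ (∀ i < p, PU i ∈ U) ∧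
    ∀ i < p, PX ((i + 1) % p) = f (PX i, PU i)

/-- Average cost `ℓ_Π = (1/p) Σ_{i<p} ℓ(Π(i))` of a `p`-periodic orbit. -/
noncomputable def avgCost (ℓ : E × F → ℝ) (p : ℕ) (PX : ℕ → E) (PU : ℕ → F) : ℝ :=
  (1 / (p : ℝ)) * ∑ i ∈ Finset.range p, ℓ (PX i, PU i)

/-- Average `(1/p) Σ_{i<p} g(Π_X(i))` of a function over the state part of an orbit. -/
noncomputable def avgOrbit (g : E → ℝ) (p : ℕ) (PX : ℕ → E) : ℝ :=
  (1 / (p : ℝ)) * ∑ i ∈ Finset.range p, g (PX i)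

/-- `Π*` is an optimal periodic orbit: it is feasible and its average cost is the
infimum of the average costs over all feasible periodic orbits. -/
def IsOptimalOrbit (f : E × F → E) (X : Set E) (U : Set F) (ℓ : E × F → ℝ) (p : ℕ)
    (PX : ℕ → E) (PU : ℕ → F) : Prop :=
  FeasOrbit f X U p PX PU ∧
    ∀ q : ℕ, 0 < q → ∀ (QX : ℕ → E) (QU : ℕ → F),
      FeasOrbit f X U q QX QU → avgCost ℓ p PX PU ≤ avgCost ℓ q QX QU

/-- Accumulated stage cost `J^1_K(x, u)`. -/
noncomputable def J1 (f : E × F → E) (ℓ : E × F → ℝ) (x : E) (u : ℕ → F) (K : ℕ) : ℝ :=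
  ∑ k ∈ Finset.range K, ℓ (traj f x u k, u k)

/-- Finite-horizon cost functional `J_N(x, u)` with terminal cost `Vf`. -/
noncomputable def JN (f : E × F → E) (ℓ : E × F → ℝ) (Vf : E → ℝ) (x : E) (u : ℕ → F)
    (N : ℕ) : ℝ :=
  J1 f ℓ x u N + Vf (traj f x u N)

/-- Optimal value function `V_N(x)` of the terminal-constrained problem. -/
noncomputable def VN (f : E × F → E) (X : Set E) (U : Set F) (ℓ : E × F → ℝ) (Vf : E → ℝ)
    (Xf : Set E) (N : ℕ) (x : E) : ℝ :=
  sInf ((fun u => JN f ℓ Vf x u N) '' {u : ℕ → F | FeasN f X U x N u ∧ traj f x u N ∈ Xf})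

/-- Rotated stage cost `ℓ̃(x,u) = ℓ(x,u) - ℓ_{Π*} + λ(x) - λ(f(x,u))`. -/
def rotCost (f : E × F → E) (ℓ : E × F → ℝ) (lam : E → ℝ) (lp : ℝ) (z : E × F) : ℝ :=
  ℓ z - lp + lam z.1 - lam (f z)

/-- Finite-horizon Cesàro cost `J^ces_K(x,u) = Σ_{k<K} (1 - k/K) ℓ(x_u(k,x), u(k))`. -/
noncomputable def Jces (f : E × F → E) (ℓ : E × F → ℝ) (x : E) (u : ℕ → F) (K : ℕ) : ℝ :=
  ∑ k ∈ Finset.range K, (1 - (k : ℝ) / (K : ℝ)) * ℓ (traj f x u k, u k)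

/-- Infinite-horizon Cesàro cost `J^ces_∞(x,u) = limsup_K J^ces_K(x,u)`. -/
noncomputable def JcesInf (f : E × F → E) (ℓ : E × F → ℝ) (x : E) (u : ℕ → F) : ℝ :=
  limsup (fun K : ℕ => Jces f ℓ x u K) atTop

/-- Unconditioned infinite-horizon value `V^uc_∞(x)`. -/
noncomputable def VucInf (f : E × F → E) (X : Set E) (U : Set F) (ℓ : E × F → ℝ)
    (x : E) : ℝ :=
  sInf ((fun u => JcesInf f ℓ x u) '' {u : ℕ → F | FeasInf f X U x u})

/-- Closed-loop state trajectory `x_μ(k, x)` under a feedback law `μ`. -/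
def trajCl (f : E × F → E) (μ : E → F) (x : E) : ℕ → E
  | 0 => x
  | k + 1 => f (trajCl f μ x k, μ (trajCl f μ x k))

/-- Closed-loop finite-horizon Cesàro cost `J^cl_K(x, μ)`. -/
noncomputable def JclK (f : E × F → E) (ℓ : E × F → ℝ) (μ : E → F) (x : E) (K : ℕ) : ℝ :=
  ∑ k ∈ Finset.range K, (1 - (k : ℝ) / (K : ℝ)) * ℓ (trajCl f μ x k, μ (trajCl f μ x k))

/-- Closed-loop infinite-horizon Cesàro cost `J^cl_∞(x, μ)`. -/
noncomputable def JclInf (f : E × F → E) (ℓ : E × F → ℝ) (μ : E → F) (x : E) : ℝ :=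
  limsup (fun K : ℕ => JclK f ℓ μ x K) atTop

end EMPCDefs

/-- Class `K_∞` comparison functions `[0,∞) → [0,∞)`. -/
def IsKInf (α : ℝ → ℝ) : Prop :=
  ContinuousOn α (Set.Ici 0) ∧ StrictMonoOn α (Set.Ici 0) ∧ α 0 = 0 ∧
    Filter.Tendsto α Filter.atTop Filter.atTop

/-- Class `L` comparison functions `[0,∞) → [0,∞)`. -/
def IsClassL (σ : ℝ → ℝ) : Prop :=
  ContinuousOn σ (Set.Ici 0) ∧ AntitoneOn σ (Set.Ici 0) ∧ (∀ t, 0 ≤ t → 0 ≤ σ t) ∧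
    Filter.Tendsto σ Filter.atTop (nhds 0)


/-!
Along a periodic orbit the storage terms `λ(x) - λ(f(x,u))` telescope, so the rotated stage costs
sum to `p ℓ_{Π*} - p ℓ_{Π*} = 0`; strict dissipativity makes each of them nonnegative on the
orbit, hence each vanishes. With `ℓ̃ = 0`, assumption A4 says exactly that `V_f + λ` is invariant
along the orbit, so it equals its own orbit average.
-/

open Finset

theorem Finset.sum_range_add_one_mod {M : Type*} [AddCommMonoid M] (g : ℕ → M) (p : ℕ) :
    ∑ i ∈ range p, g ((i + 1) % p) = ∑ i ∈ range p, g i := by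
  cases p with
  | zero => simp
  | succ n =>
    rw [sum_range_succ, sum_range_succ', Nat.mod_self]
    congr 1
    exact sum_congr rfl fun i hi => by rw [Nat.mod_eq_of_lt (by simpa using hi)]

theorem apply_eq_apply_zero_of_forall_add_one_mod_eq {α : Type*} {p : ℕ} {h : ℕ → α}
    (hh : ∀ i < p, h ((i + 1) % p) = h i) : ∀ i < p, h i = h 0
  | 0, _ => rfl
  | i + 1, hi => by
    rw [← Nat.mod_eq_of_lt hi, hh i (by omega),
      apply_eq_apply_zero_of_forall_add_one_mod_eq hh i (by omega)]

section PeriodicOrbit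

variable {E F : Type*} {p : ℕ}

theorem distOrbit_self [NormedAddCommGroup E] [NormedAddCommGroup F] {P : ℕ → E × F} {i : ℕ}
    (hi : i < p) : distOrbit p P (P i) = 0 := by
  have : Nonempty (Fin p) := ⟨⟨i, hi⟩⟩
  refine le_antisymm ?_ (le_ciInf fun _ => norm_nonneg _)
  simpa [distOrbit] using ciInf_le (Finite.bddBelow_range fun j : Fin p => ‖P i - P j‖) ⟨i, hi⟩

variable {PX : ℕ → E}

theorem mul_avgCost (hp : 0 < p) (ℓ : E × F → ℝ) (PU : ℕ → F) :
    (p : ℝ) * avgCost ℓ p PX PU = ∑ i ∈ range p, ℓ (PX i, PU i) := by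
  rw [avgCost, ← mul_assoc, mul_one_div_cancel (by positivity), one_mul]

theorem avgOrbit_add (g h : E → ℝ) :
    avgOrbit (fun x => g x + h x) p PX = avgOrbit g p PX + avgOrbit h p PX := by
  simp only [avgOrbit, sum_add_distrib, mul_add]

theorem avgOrbit_eq_of_forall_eq (hp : 0 < p) {g : E → ℝ} {c : ℝ}
    (hg : ∀ i < p, g (PX i) = c) : avgOrbit g p PX = c := by
  rw [avgOrbit, sum_congr rfl fun i hi => hg i (mem_range.1 hi), sum_const, card_range,
    nsmul_eq_mul, ← mul_assoc, one_div_mul_cancel (by positivity), one_mul]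

variable {f : E × F → E} {PU : ℕ → F}

theorem sum_rotCost_orbit_eq_zero (hp : 0 < p) (hper : ∀ i < p, PX ((i + 1) % p) = f (PX i, PU i))
    (ℓ : E × F → ℝ) (lam : E → ℝ) :
    ∑ i ∈ range p, rotCost f ℓ lam (avgCost ℓ p PX PU) (PX i, PU i) = 0 := by
  have hterm : ∀ i ∈ range p, rotCost f ℓ lam (avgCost ℓ p PX PU) (PX i, PU i) =
      (ℓ (PX i, PU i) - avgCost ℓ p PX PU) + (lam (PX i) - lam (PX ((i + 1) % p))) := by
    intro i hi
    rw [rotCost, hper i (mem_range.1 hi)]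
    ring
  rw [sum_congr rfl hterm, sum_add_distrib, sum_sub_distrib, sum_sub_distrib,
    sum_range_add_one_mod (fun i => lam (PX i)), sum_const, card_range, nsmul_eq_mul,
    mul_avgCost hp]
  ring

variable [NormedAddCommGroup E] [NormedAddCommGroup F] {X : Set E} {U : Set F} {ℓ : E × F → ℝ}
  {lam : E → ℝ}

theorem FeasOrbit.rotCost_nonneg (horb : FeasOrbit f X U p PX PU) {α : ℝ → ℝ} (hα : α 0 = 0)
    {lp : ℝ} (hdiss : ∀ x ∈ X, ∀ u ∈ U, f (x, u) ∈ X →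
      α (distOrbit p (fun i => (PX i, PU i)) (x, u)) ≤ rotCost f ℓ lam lp (x, u))
    {i : ℕ} (hi : i < p) : 0 ≤ rotCost f ℓ lam lp (PX i, PU i) := by
  obtain ⟨hX, hU, hper⟩ := horb
  have hfX : f (PX i, PU i) ∈ X := hper i hi ▸ hX _ (Nat.mod_lt _ (by omega))
  have := hdiss _ (hX i hi) _ (hU i hi) hfX
  rwa [distOrbit_self (P := fun i => (PX i, PU i)) hi, hα] at this

theorem FeasOrbit.rotCost_eq_zero (horb : FeasOrbit f X U p PX PU) {α : ℝ → ℝ} (hα : α 0 = 0)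
    (hdiss : ∀ x ∈ X, ∀ u ∈ U, f (x, u) ∈ X →
      α (distOrbit p (fun i => (PX i, PU i)) (x, u)) ≤
        rotCost f ℓ lam (avgCost ℓ p PX PU) (x, u))
    {i : ℕ} (hi : i < p) : rotCost f ℓ lam (avgCost ℓ p PX PU) (PX i, PU i) = 0 :=
  (sum_eq_zero_iff_of_nonneg fun j hj => horb.rotCost_nonneg hα hdiss (mem_range.1 hj)).1
    (sum_rotCost_orbit_eq_zero (by omega) horb.2.2 ℓ lam) i (mem_range.2 hi)

end PeriodicOrbit

theorem stmt0_general
    (dn dm : ℕ)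
    (X : Set (EuclideanSpace ℝ (Fin dn))) (U : Set (EuclideanSpace ℝ (Fin dm)))
    (f : EuclideanSpace ℝ (Fin dn) × EuclideanSpace ℝ (Fin dm) → EuclideanSpace ℝ (Fin dn))
    (ℓ : EuclideanSpace ℝ (Fin dn) × EuclideanSpace ℝ (Fin dm) → ℝ)
    (p : ℕ)
    (PX : ℕ → EuclideanSpace ℝ (Fin dn)) (PU : ℕ → EuclideanSpace ℝ (Fin dm))
    (hopt : IsOptimalOrbit f X U ℓ p PX PU)
    -- A2 (strict dissipativity)
    (lam : EuclideanSpace ℝ (Fin dn) → ℝ)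
    (αl : ℝ → ℝ) (hαl : IsKInf αl)
    (hdiss : ∀ x ∈ X, ∀ u ∈ U, f (x, u) ∈ X →
      αl (distOrbit p (fun i => (PX i, PU i)) (x, u)) ≤
        rotCost f ℓ lam (avgCost ℓ p PX PU) (x, u))
    -- A3 (terminal conditions)
    (Vf : EuclideanSpace ℝ (Fin dn) → ℝ)
    -- A4 (terminal cost on the optimal orbit)
    (hA4 : ∀ i < p, Vf (PX i) = ℓ (PX i, PU i) - avgCost ℓ p PX PU + Vf (f (PX i, PU i))) :
    ∀ i < p,
      rotCost f ℓ lam (avgCost ℓ p PX PU) (PX i, PU i) = 0 ∧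
        Vf (PX i) + lam (PX i) - avgOrbit Vf p PX - avgOrbit lam p PX = 0 := by
  have hrot := fun i (hi : i < p) => FeasOrbit.rotCost_eq_zero hopt.1 hαl.2.2.1 hdiss hi
  have hinv : ∀ i < p,
      Vf (PX ((i + 1) % p)) + lam (PX ((i + 1) % p)) = Vf (PX i) + lam (PX i) := by
    intro i hi
    have := hrot i hi
    rw [rotCost] at this
    rw [hopt.1.2.2 i hi]
    linarith [hA4 i hi]
  intro i hi
  have hconst := apply_eq_apply_zero_of_forall_add_one_mod_eq
    (h := fun j => Vf (PX j) + lam (PX j)) hinv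
  refine ⟨hrot i hi, ?_⟩
  rw [sub_sub, ← avgOrbit_add, avgOrbit_eq_of_forall_eq (by omega) hconst, hconst i hi, sub_self]

theorem stmt0
    (dn dm : ℕ)
    (X : Set (EuclideanSpace ℝ (Fin dn))) (U : Set (EuclideanSpace ℝ (Fin dm)))
    (f : EuclideanSpace ℝ (Fin dn) × EuclideanSpace ℝ (Fin dm) → EuclideanSpace ℝ (Fin dn))
    (ℓ : EuclideanSpace ℝ (Fin dn) × EuclideanSpace ℝ (Fin dm) → ℝ)
    (p : ℕ) (hp : 0 < p)
    (PX : ℕ → EuclideanSpace ℝ (Fin dn)) (PU : ℕ → EuclideanSpace ℝ (Fin dm))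
    (hopt : IsOptimalOrbit f X U ℓ p PX PU)
    -- A1 (continuity and compactness)
    (hcomp : IsCompact (X ×ˢ U))
    (hfc : ContinuousOn f (X ×ˢ U)) (hlc : ContinuousOn ℓ (X ×ˢ U))
    -- A2 (strict dissipativity)
    (lam : EuclideanSpace ℝ (Fin dn) → ℝ) (hlamc : ContinuousOn lam X)
    (αl : ℝ → ℝ) (hαl : IsKInf αl)
    (hdiss : ∀ x ∈ X, ∀ u ∈ U, f (x, u) ∈ X →
      αl (distOrbit p (fun i => (PX i, PU i)) (x, u)) ≤
        rotCost f ℓ lam (avgCost ℓ p PX PU) (x, u))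
    -- A3 (terminal conditions)
    (Xf : Set (EuclideanSpace ℝ (Fin dn))) (hXfc : IsCompact Xf) (hXfX : Xf ⊆ X)
    (hPXf : ∀ i < p, PX i ∈ Xf)
    (Vf : EuclideanSpace ℝ (Fin dn) → ℝ) (hVfc : ContinuousOn Vf Xf)
    (uf : EuclideanSpace ℝ (Fin dn) → EuclideanSpace ℝ (Fin dm))
    (hufU : ∀ x ∈ Xf, uf x ∈ U) (hufX : ∀ x ∈ Xf, f (x, uf x) ∈ X)
    (hufXf : ∀ x ∈ Xf, f (x, uf x) ∈ Xf)
    (hufD : ∀ x ∈ Xf, Vf (f (x, uf x)) + ℓ (x, uf x) - avgCost ℓ p PX PU ≤ Vf x)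
    -- A4 (terminal cost on the optimal orbit)
    (hA4 : ∀ i < p, Vf (PX i) = ℓ (PX i, PU i) - avgCost ℓ p PX PU + Vf (f (PX i, PU i))) :
    ∀ i < p,
      rotCost f ℓ lam (avgCost ℓ p PX PU) (PX i, PU i) = 0 ∧
        Vf (PX i) + lam (PX i) - avgOrbit Vf p PX - avgOrbit lam p PX = 0 :=
  stmt0_general dn dm X U f ℓ p PX PU hopt lam αl hαl hdiss Vf hA4
end

section
/- Under Assumptions A1 (continuity and compactness), A2 (strict dissipativity), A3 (terminal conditions), A4 (terminal cost on orbit) and A5 (bound on V_N), the (non-rotated) value function satisfies the decrease inequality V_N(f(x,μ_N(x))) − V_N(x) ≤ −ℓ(x,μ_N(x)) + ℓ_{Π*} for all x ∈ X_N. -/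
open Filter Topology

theorem stmt4
    (dn dm : ℕ)
    (X : Set (EuclideanSpace ℝ (Fin dn))) (U : Set (EuclideanSpace ℝ (Fin dm)))
    (f : EuclideanSpace ℝ (Fin dn) × EuclideanSpace ℝ (Fin dm) → EuclideanSpace ℝ (Fin dn))
    (ℓ : EuclideanSpace ℝ (Fin dn) × EuclideanSpace ℝ (Fin dm) → ℝ)
    (p : ℕ) (hp : 0 < p)
    (PX : ℕ → EuclideanSpace ℝ (Fin dn)) (PU : ℕ → EuclideanSpace ℝ (Fin dm))
    (hopt : IsOptimalOrbit f X U ℓ p PX PU)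
    -- A1 (continuity and compactness)
    (hcomp : IsCompact (X ×ˢ U))
    (hfc : ContinuousOn f (X ×ˢ U)) (hlc : ContinuousOn ℓ (X ×ˢ U))
    -- A2 (strict dissipativity)
    (lam : EuclideanSpace ℝ (Fin dn) → ℝ) (hlamc : ContinuousOn lam X)
    (αl : ℝ → ℝ) (hαl : IsKInf αl)
    (hdiss : ∀ x ∈ X, ∀ u ∈ U, f (x, u) ∈ X →
      αl (distOrbit p (fun i => (PX i, PU i)) (x, u)) ≤
        rotCost f ℓ lam (avgCost ℓ p PX PU) (x, u))
    -- A3 (terminal conditions)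
    (Xf : Set (EuclideanSpace ℝ (Fin dn))) (hXfc : IsCompact Xf) (hXfX : Xf ⊆ X)
    (hPXf : ∀ i < p, PX i ∈ Xf)
    (Vf : EuclideanSpace ℝ (Fin dn) → ℝ) (hVfc : ContinuousOn Vf Xf)
    (uf : EuclideanSpace ℝ (Fin dn) → EuclideanSpace ℝ (Fin dm))
    (hufU : ∀ x ∈ Xf, uf x ∈ U) (hufX : ∀ x ∈ Xf, f (x, uf x) ∈ X)
    (hufXf : ∀ x ∈ Xf, f (x, uf x) ∈ Xf)
    (hufD : ∀ x ∈ Xf, Vf (f (x, uf x)) + ℓ (x, uf x) - avgCost ℓ p PX PU ≤ Vf x)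
    -- A4 (terminal cost on the optimal orbit)
    (hA4 : ∀ i < p, Vf (PX i) = ℓ (PX i, PU i) - avgCost ℓ p PX PU + Vf (f (PX i, PU i)))
    -- A5 (bound on V_N)
    (γV : ℝ → ℝ) (hγV : IsKInf γV)
    (hA5 : ∀ N : ℕ, 0 < N → ∀ x ∈ XN f X U Xf N, ∀ i < p,
      ‖x - PX i‖ = distOrbitX p PX x →
      |VN f X U ℓ Vf Xf N x - VN f X U ℓ Vf Xf N (PX i)| ≤ γV (distOrbitX p PX x))
    -- EMPC horizon and feedback law μ_N (first element of a minimizer)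
    (N : ℕ) (hN : 0 < N)
    (μ : EuclideanSpace ℝ (Fin dn) → EuclideanSpace ℝ (Fin dm))
    (hμ : ∀ x ∈ XN f X U Xf N, ∃ u : ℕ → EuclideanSpace ℝ (Fin dm),
      FeasN f X U x N u ∧ traj f x u N ∈ Xf ∧
        JN f ℓ Vf x u N = VN f X U ℓ Vf Xf N x ∧ μ x = u 0) :
    ∀ x ∈ XN f X U Xf N,
      VN f X U ℓ Vf Xf N (f (x, μ x)) - VN f X U ℓ Vf Xf N x ≤
        -ℓ (x, μ x) + avgCost ℓ p PX PU := by
  classical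
  obtain ⟨hfeasO, -⟩ := hopt
  have hXUne : ((PX 0, PU 0) : _ × _) ∈ X ×ˢ U :=
    ⟨hfeasO.1 0 hp, hfeasO.2.1 0 hp⟩
  obtain ⟨zℓ, hzℓ, hzℓmin⟩ := hcomp.exists_isMinOn ⟨_, hXUne⟩ hlc
  obtain ⟨zV, hzV, hzVmin⟩ := hXfc.exists_isMinOn ⟨_, hPXf 0 hp⟩ hVfc
  intro x hx
  obtain ⟨u, hfeas, hterm, hJ, hμ0⟩ := hμ x hx
  set lp := avgCost ℓ p PX PU with hlp
  set y := f (x, μ x) with hy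
  set xN := traj f x u N with hxN
  set v : ℕ → EuclideanSpace ℝ (Fin dm) :=
    fun k => if k + 1 < N then u (k + 1) else uf xN with hv
  have hy1 : y = traj f x u 1 := by simp [hy, hμ0, traj]
  have htr : ∀ k < N, traj f y v k = traj f x u (k + 1) := by
    intro k hk
    induction k with
    | zero => simpa [traj] using hy1
    | succ k ih =>
      have hkN : k < N := Nat.lt_of_succ_lt hk
      have hvk : v k = u (k + 1) := by simp [hv, hk]
      simp [traj, ih hkN, hvk]
  have hNpred : N - 1 + 1 = N := Nat.succ_pred_eq_of_pos hN
  have hvN : v (N - 1) = uf xN := by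
    have : ¬ (N - 1 + 1 < N) := by omega
    simp [hv, this]
  have htrN : traj f y v N = f (xN, uf xN) := by
    conv_lhs => rw [← hNpred]
    rw [traj, htr (N - 1) (by omega), hNpred, hvN]
  have hufU' := hufU xN hterm
  have hufXf' := hufXf xN hterm
  have hfeasv : FeasN f X U y N v := by
    constructor
    · intro k hk
      by_cases h : k + 1 < N
      · simpa [hv, h] using hfeas.1 (k + 1) h
      · simpa [hv, h] using hufU'
    · intro k hk
      rcases Nat.lt_or_ge k N with h | h
      · rw [htr k h]; exact hfeas.2 (k + 1) h
      · have hkN : k = N := le_antisymm hk h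
        rw [hkN, htrN]; exact hXfX hufXf'
  have htermv : traj f y v N ∈ Xf := by rw [htrN]; exact hufXf'
  -- cost of the shifted sequence
  have hsumv : J1 f ℓ y v N =
      (∑ k ∈ Finset.range (N - 1), ℓ (traj f x u (k + 1), u (k + 1))) + ℓ (xN, uf xN) := by
    unfold J1
    rw [← hNpred, Finset.sum_range_succ]
    congr 1
    · refine Finset.sum_congr rfl fun k hk => ?_
      have hk' : k < N - 1 := Finset.mem_range.mp hk
      have hvk : v k = u (k + 1) := by
        have : k + 1 < N := by omega
        simp [hv, this]
      rw [htr k (by omega), hvk]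
    · rw [htr (N - 1) (by omega), hNpred, hvN]
  have hsumu : J1 f ℓ x u N =
      ℓ (x, u 0) + ∑ k ∈ Finset.range (N - 1), ℓ (traj f x u (k + 1), u (k + 1)) := by
    unfold J1
    rw [← hNpred, Finset.sum_range_succ']
    simp [traj, add_comm]
  have hcost : JN f ℓ Vf y v N ≤ VN f X U ℓ Vf Xf N x - ℓ (x, μ x) + lp := by
    have hD := hufD xN hterm
    have : JN f ℓ Vf y v N =
        (∑ k ∈ Finset.range (N - 1), ℓ (traj f x u (k + 1), u (k + 1)))
          + (ℓ (xN, uf xN) + Vf (f (xN, uf xN))) := by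
      unfold JN; rw [hsumv, htrN]; ring
    rw [this]
    have hJx : JN f ℓ Vf x u N =
        ℓ (x, u 0) + (∑ k ∈ Finset.range (N - 1), ℓ (traj f x u (k + 1), u (k + 1)))
          + Vf xN := by
      unfold JN; rw [hsumu]
    rw [← hJ, hJx, hμ0]
    linarith
  -- V_N(y) ≤ cost of the shifted sequence
  have hbdd : BddBelow ((fun w => JN f ℓ Vf y w N) ''
      {w : ℕ → EuclideanSpace ℝ (Fin dm) | FeasN f X U y N w ∧ traj f y w N ∈ Xf}) := by
    refine ⟨N * ℓ zℓ + Vf zV, ?_⟩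
    rintro r ⟨w, ⟨hwf, hwt⟩, rfl⟩
    have h1 : (N : ℝ) * ℓ zℓ ≤ J1 f ℓ y w N := by
      have : ∀ k ∈ Finset.range N, ℓ zℓ ≤ ℓ (traj f y w k, w k) := by
        intro k hk
        have hk' : k < N := Finset.mem_range.mp hk
        exact hzℓmin ⟨hwf.2 k hk'.le, hwf.1 k hk'⟩
      calc (N : ℝ) * ℓ zℓ = ∑ _k ∈ Finset.range N, ℓ zℓ := by
            simp [mul_comm]
        _ ≤ J1 f ℓ y w N := Finset.sum_le_sum this
    have h2 : Vf zV ≤ Vf (traj f y w N) := hzVmin hwt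
    simp only [JN]
    linarith
  have hmem : JN f ℓ Vf y v N ∈ (fun w => JN f ℓ Vf y w N) ''
      {w : ℕ → EuclideanSpace ℝ (Fin dm) | FeasN f X U y N w ∧ traj f y w N ∈ Xf} :=
    ⟨v, ⟨hfeasv, htermv⟩, rfl⟩
  have hVNle : VN f X U ℓ Vf Xf N y ≤ JN f ℓ Vf y v N := csInf_le hbdd hmem
  linarith
end

section
/- (Relaxation for minimal orbits) Let Assumptions A1 (continuity and compactness), A2 (strict dissipativity) and A3 (terminal conditions) hold, and suppose the optimal periodic orbit Π* is minimal (Π*_X is injective). Then Assumption A4 holds, i.e., V_f(x) = ℓ(x,u) − ℓ_{Π*} + V_f(f(x,u)) for all (x,u) = Π*(i), i ∈ {0,...,p*−1}. -/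
open Filter Topology

private lemma exists_pos_forall_aux (p : ℕ) (P : ℕ → ℝ → Prop)
    (hmono : ∀ j, ∀ η η' : ℝ, η' ≤ η → P j η → P j η')
    (h : ∀ j < p, ∃ η > 0, P j η) : ∃ η > 0, ∀ j < p, P j η := by
  induction p with
  | zero => exact ⟨1, one_pos, fun j hj => absurd hj (Nat.not_lt_zero j)⟩
  | succ p ih =>
    obtain ⟨η1, hη1, h1⟩ := ih (fun j hj => h j (hj.trans (Nat.lt_succ_self p)))
    obtain ⟨η2, hη2, h2⟩ := h p (Nat.lt_succ_self p)
    refine ⟨min η1 η2, lt_min hη1 hη2, fun j hj => ?_⟩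
    rcases Nat.lt_succ_iff_lt_or_eq.mp hj with hj' | rfl
    · exact hmono j η1 _ (min_le_left _ _) (h1 j hj')
    · exact hmono j η2 _ (min_le_right _ _) h2

theorem stmt6
    (dn dm : ℕ)
    (X : Set (EuclideanSpace ℝ (Fin dn))) (U : Set (EuclideanSpace ℝ (Fin dm)))
    (f : EuclideanSpace ℝ (Fin dn) × EuclideanSpace ℝ (Fin dm) → EuclideanSpace ℝ (Fin dn))
    (ℓ : EuclideanSpace ℝ (Fin dn) × EuclideanSpace ℝ (Fin dm) → ℝ)
    (p : ℕ) (hp : 0 < p)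
    (PX : ℕ → EuclideanSpace ℝ (Fin dn)) (PU : ℕ → EuclideanSpace ℝ (Fin dm))
    (hopt : IsOptimalOrbit f X U ℓ p PX PU)
    -- A1 (continuity and compactness)
    (hcomp : IsCompact (X ×ˢ U))
    (hfc : ContinuousOn f (X ×ˢ U)) (hlc : ContinuousOn ℓ (X ×ˢ U))
    -- A2 (strict dissipativity)
    (lam : EuclideanSpace ℝ (Fin dn) → ℝ) (hlamc : ContinuousOn lam X)
    (αl : ℝ → ℝ) (hαl : IsKInf αl)
    (hdiss : ∀ x ∈ X, ∀ u ∈ U, f (x, u) ∈ X →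
      αl (distOrbit p (fun i => (PX i, PU i)) (x, u)) ≤
        rotCost f ℓ lam (avgCost ℓ p PX PU) (x, u))
    -- A3 (terminal conditions)
    (Xf : Set (EuclideanSpace ℝ (Fin dn))) (hXfc : IsCompact Xf) (hXfX : Xf ⊆ X)
    (hPXf : ∀ i < p, PX i ∈ Xf)
    (Vf : EuclideanSpace ℝ (Fin dn) → ℝ) (hVfc : ContinuousOn Vf Xf)
    (uf : EuclideanSpace ℝ (Fin dn) → EuclideanSpace ℝ (Fin dm))
    (hufU : ∀ x ∈ Xf, uf x ∈ U) (hufX : ∀ x ∈ Xf, f (x, uf x) ∈ X)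
    (hufXf : ∀ x ∈ Xf, f (x, uf x) ∈ Xf)
    (hufD : ∀ x ∈ Xf, Vf (f (x, uf x)) + ℓ (x, uf x) - avgCost ℓ p PX PU ≤ Vf x)
    -- A6 (minimality of the optimal orbit)
    (hmin : Set.InjOn PX (Set.Iio p)) :
    ∀ i < p, Vf (PX i) = ℓ (PX i, PU i) - avgCost ℓ p PX PU + Vf (f (PX i, PU i)) := by
  obtain ⟨⟨hPXX, hPUU, hdyn⟩, -⟩ := hopt
  obtain ⟨hαc, hαm, hα0, -⟩ := hαl
  set lp := avgCost ℓ p PX PU with hlpdef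
  -- the closed-loop trajectory under the terminal control law, starting at PX 0
  set x : ℕ → EuclideanSpace ℝ (Fin dn) := trajCl f uf (PX 0) with hxdef
  have hxs : ∀ k, x (k + 1) = f (x k, uf (x k)) := fun k => rfl
  have hxXf : ∀ k, x k ∈ Xf := by
    intro k; induction k with
    | zero => exact hPXf 0 hp
    | succ k ih => rw [hxs]; exact hufXf _ ih
  have hxX : ∀ k, x k ∈ X := fun k => hXfX (hxXf k)
  have huU : ∀ k, uf (x k) ∈ U := fun k => hufU _ (hxXf k)
  have hzmem : ∀ k, (x k, uf (x k)) ∈ X ×ˢ U := fun k => ⟨hxX k, huU k⟩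
  have hPprod : ∀ j < p, (PX j, PU j) ∈ X ×ˢ U := fun j hj => ⟨hPXX j hj, hPUU j hj⟩
  -- one-step terminal inequality
  have hstep : ∀ k, Vf (x (k + 1)) + ℓ (x k, uf (x k)) - lp ≤ Vf (x k) := by
    intro k; rw [hxs]; exact hufD _ (hxXf k)
  -- distance of the closed loop to the orbit
  set D : ℕ → ℝ := fun k => distOrbit p (fun i => (PX i, PU i)) (x k, uf (x k)) with hDdef
  have hDnn : ∀ k, 0 ≤ D k := fun k => Real.iInf_nonneg (fun i => norm_nonneg _)
  -- dissipation inequality along the closed loop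
  have hdd : ∀ k, αl (D k) ≤ ℓ (x k, uf (x k)) - lp + lam (x k) - lam (x (k + 1)) := by
    intro k
    have h := hdiss (x k) (hxX k) (uf (x k)) (huU k) (hXfX (hufXf _ (hxXf k)))
    simpa [rotCost, hxs] using h
  have hαnn : ∀ k, 0 ≤ αl (D k) := by
    intro k
    have := hαm.monotoneOn (Set.self_mem_Ici) (hDnn k) (hDnn k)
    rw [hα0] at this; exact this
  -- telescoping bound on the partial sums
  have hteles : ∀ K, ∑ k ∈ Finset.range K, αl (D k) ≤
      Vf (x 0) - Vf (x K) + lam (x 0) - lam (x K) := by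
    intro K; induction K with
    | zero => simp
    | succ K ih =>
      rw [Finset.sum_range_succ]
      have h1 := hstep K
      have h2 := hdd K
      linarith
  obtain ⟨BV, hBV⟩ := hXfc.exists_bound_of_continuousOn hVfc
  obtain ⟨BL, hBL⟩ := hXfc.exists_bound_of_continuousOn (hlamc.mono hXfX)
  have hsumbd : ∀ K, ∑ k ∈ Finset.range K, αl (D k) ≤ 2 * BV + 2 * BL := by
    intro K
    have b1 := hBV _ (hxXf 0); have b2 := hBV _ (hxXf K)
    have b3 := hBL _ (hxXf 0); have b4 := hBL _ (hxXf K)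
    rw [Real.norm_eq_abs, abs_le] at b1 b2 b3 b4
    have := hteles K
    linarith
  have htend0 : Tendsto (fun k => αl (D k)) atTop (nhds 0) :=
    (summable_of_sum_range_le hαnn hsumbd).tendsto_atTop_zero
  -- D k → 0
  have hDsmall : ∀ η > (0:ℝ), ∃ K, ∀ k ≥ K, D k < η := by
    intro η hη
    have hαη : 0 < αl η := by
      have := hαm (Set.self_mem_Ici) (show η ∈ Set.Ici (0:ℝ) from hη.le) hη
      rw [hα0] at this; exact this
    obtain ⟨K, hK⟩ := (Filter.eventually_atTop.mp (htend0.eventually_lt_const hαη))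
    refine ⟨K, fun k hk => ?_⟩
    by_contra hcon; push_neg at hcon
    have : αl η ≤ αl (D k) := hαm.monotoneOn (show η ∈ Set.Ici (0:ℝ) from hη.le)
      (hDnn k) hcon
    exact absurd (hK k hk) (not_lt.mpr this)
  -- nearest orbit index
  have hmin_ex : ∀ k, ∃ j, j < p ∧ ‖(x k, uf (x k)) - (PX j, PU j)‖ = D k := by
    intro k
    have : Nonempty (Fin p) := ⟨⟨0, hp⟩⟩
    obtain ⟨i0, hi0⟩ := Finite.exists_min
      (fun i : Fin p => ‖(x k, uf (x k)) - (PX ↑i, PU ↑i)‖)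
    refine ⟨i0.1, i0.2, ?_⟩
    have h1 : D k ≤ ‖(x k, uf (x k)) - (PX ↑i0, PU ↑i0)‖ :=
      ciInf_le (Finite.bddBelow_range _) i0
    have h2 : ‖(x k, uf (x k)) - (PX ↑i0, PU ↑i0)‖ ≤ D k := le_ciInf hi0
    exact le_antisymm h2 h1
  choose φ hφlt hφeq using hmin_ex
  -- separation of the (injective) orbit states
  have hsep : ∃ δ > (0:ℝ), ∀ a < p, ∀ b < p, ‖PX a - PX b‖ < δ → a = b := by
    apply exists_pos_forall_aux p (fun a δ => ∀ b < p, ‖PX a - PX b‖ < δ → a = b)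
      (fun a η η' hle h b hb hn => h b hb (hn.trans_le hle))
    intro a ha
    apply exists_pos_forall_aux p (fun b δ => ‖PX a - PX b‖ < δ → a = b)
      (fun b η η' hle h hn => h (hn.trans_le hle))
    intro b hb
    rcases eq_or_ne a b with rfl | hab
    · exact ⟨1, one_pos, fun _ => rfl⟩
    · refine ⟨‖PX a - PX b‖, ?_, fun h => absurd h (lt_irrefl _)⟩
      rw [gt_iff_lt, norm_pos_iff, sub_ne_zero]
      exact fun h => hab (hmin ha hb h)
  obtain ⟨δ, hδ, hsepp⟩ := hsep
  -- key claim: every phase is approached arbitrarily closely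
  have claimA : ∀ j < p, ∀ θ > (0:ℝ), ∃ k, φ k = j ∧ D k < θ := by
    intro j hj θ hθ
    -- uniform (over the finitely many orbit points) continuity of f
    have hcont : ∃ η > (0:ℝ), ∀ a < p, ∀ z ∈ X ×ˢ U, ‖z - (PX a, PU a)‖ < η →
        ‖f z - PX ((a + 1) % p)‖ < δ / 3 := by
      apply exists_pos_forall_aux p
        (fun a η => ∀ z ∈ X ×ˢ U, ‖z - (PX a, PU a)‖ < η → ‖f z - PX ((a + 1) % p)‖ < δ / 3)
        (fun a η η' hle h z hz hn => h z hz (hn.trans_le hle))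
      intro a ha
      have hcw := hfc.continuousWithinAt (hPprod a ha)
      rw [Metric.continuousWithinAt_iff] at hcw
      obtain ⟨η, hη, hball⟩ := hcw (δ / 3) (by linarith)
      refine ⟨η, hη, fun z hz hn => ?_⟩
      have := hball hz (by rwa [dist_eq_norm])
      rwa [dist_eq_norm, ← hdyn a ha] at this
    obtain ⟨η0, hη0, hcont'⟩ := hcont
    set η : ℝ := min η0 (min θ (δ / 3)) with hηdef
    have hηpos : 0 < η := lt_min hη0 (lt_min hθ (by linarith))
    obtain ⟨K, hK⟩ := hDsmall η hηpos
    -- the phase increments by one each step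
    have hinc : ∀ k, K ≤ k → φ (k + 1) = (φ k + 1) % p := by
      intro k hk
      have h2 : ‖x (k + 1) - PX ((φ k + 1) % p)‖ < δ / 3 := by
        have hfz : ‖f (x k, uf (x k)) - PX ((φ k + 1) % p)‖ < δ / 3 := by
          apply hcont' (φ k) (hφlt k) _ (hzmem k)
          rw [hφeq k]
          exact (hK k hk).trans_le (min_le_left _ _)
        rwa [hxs]
      have h3 : ‖x (k + 1) - PX (φ (k + 1))‖ < δ / 3 := by
        have hfst : ‖x (k + 1) - PX (φ (k + 1))‖ ≤
            ‖(x (k + 1), uf (x (k + 1))) - (PX (φ (k + 1)), PU (φ (k + 1)))‖ := by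
          exact norm_fst_le ((x (k + 1), uf (x (k + 1))) - (PX (φ (k + 1)), PU (φ (k + 1))))
        have := (hφeq (k + 1)) ▸ hfst
        exact this.trans_lt ((hK (k + 1) (hk.trans (Nat.le_succ k))).trans_le
          ((min_le_right _ _).trans (min_le_right _ _)))
      have htri : ‖PX (φ (k + 1)) - PX ((φ k + 1) % p)‖ < δ := by
        calc ‖PX (φ (k + 1)) - PX ((φ k + 1) % p)‖
            = ‖(PX (φ (k + 1)) - x (k + 1)) + (x (k + 1) - PX ((φ k + 1) % p))‖ := by
              rw [sub_add_sub_cancel]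
          _ ≤ ‖PX (φ (k + 1)) - x (k + 1)‖ + ‖x (k + 1) - PX ((φ k + 1) % p)‖ :=
              norm_add_le _ _
          _ < δ := by rw [norm_sub_rev]; linarith
      exact hsepp _ (hφlt (k + 1)) _ (Nat.mod_lt _ hp) htri
    have hphase : ∀ t, φ (K + t) = (φ K + t) % p := by
      intro t; induction t with
      | zero => simpa using (Nat.mod_eq_of_lt (hφlt K)).symm
      | succ t ih =>
        have : K + (t + 1) = (K + t) + 1 := by ring
        rw [this, hinc (K + t) (Nat.le_add_right _ _), ih, Nat.mod_add_mod,
          Nat.add_assoc]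
    -- pick the step reaching phase j
    refine ⟨K + (j + p - φ K), ?_, ?_⟩
    · rw [hphase]
      have h1 : φ K + (j + p - φ K) = j + p := by
        have := hφlt K; omega
      rw [h1, Nat.add_mod_right, Nat.mod_eq_of_lt hj]
    · exact (hK _ (Nat.le_add_right _ _)).trans_le
        ((min_le_right _ _).trans (min_le_left _ _))
  -- the key inequality on the orbit
  have key : ∀ j < p, Vf (PX ((j + 1) % p)) + ℓ (PX j, PU j) - lp ≤ Vf (PX j) := by
    intro j hj
    apply le_of_forall_pos_le_add
    intro ε hε
    have hj1 : (j + 1) % p < p := Nat.mod_lt _ hp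
    -- continuity of Vf at PX ((j+1)%p) within Xf
    have hVf1 := hVfc.continuousWithinAt (hPXf _ hj1)
    rw [Metric.continuousWithinAt_iff] at hVf1
    obtain ⟨θ2, hθ2, hVf1'⟩ := hVf1 (ε / 3) (by linarith)
    -- continuity of f at (PX j, PU j)
    have hfj := hfc.continuousWithinAt (hPprod j hj)
    rw [Metric.continuousWithinAt_iff] at hfj
    obtain ⟨θ1, hθ1, hfj'⟩ := hfj θ2 hθ2
    -- continuity of Vf at PX j
    have hVf0 := hVfc.continuousWithinAt (hPXf j hj)
    rw [Metric.continuousWithinAt_iff] at hVf0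
    obtain ⟨θ3, hθ3, hVf0'⟩ := hVf0 (ε / 3) (by linarith)
    -- continuity of ℓ at (PX j, PU j)
    have hlj := hlc.continuousWithinAt (hPprod j hj)
    rw [Metric.continuousWithinAt_iff] at hlj
    obtain ⟨θ4, hθ4, hlj'⟩ := hlj (ε / 3) (by linarith)
    obtain ⟨k, hφk, hDk⟩ := claimA j hj (min θ1 (min θ3 θ4))
      (lt_min hθ1 (lt_min hθ3 hθ4))
    have hzk : ‖(x k, uf (x k)) - (PX j, PU j)‖ < min θ1 (min θ3 θ4) := by
      rw [← hφk, hφeq k]; exact hDk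
    have hdz : dist (x k, uf (x k)) (PX j, PU j) < min θ1 (min θ3 θ4) := by
      rwa [dist_eq_norm]
    -- Vf (x (k+1)) close to Vf (PX ((j+1)%p))
    have hb1 : dist (Vf (x (k + 1))) (Vf (PX ((j + 1) % p))) < ε / 3 := by
      apply hVf1' (hxXf (k + 1))
      have := hfj' (hzmem k) (hdz.trans_le (min_le_left _ _))
      rwa [hxs, hdyn j hj]
    -- Vf (x k) close to Vf (PX j)
    have hb2 : dist (Vf (x k)) (Vf (PX j)) < ε / 3 := by
      apply hVf0' (hxXf k)
      rw [dist_eq_norm]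
      calc ‖x k - PX j‖ ≤ ‖(x k, uf (x k)) - (PX j, PU j)‖ := by
            exact norm_fst_le ((x k, uf (x k)) - (PX j, PU j))
        _ < θ3 := hzk.trans_le ((min_le_right _ _).trans (min_le_left _ _))
    -- ℓ (x k, uf (x k)) close to ℓ (PX j, PU j)
    have hb3 : dist (ℓ (x k, uf (x k))) (ℓ (PX j, PU j)) < ε / 3 :=
      hlj' (hzmem k) (hdz.trans_le ((min_le_right _ _).trans (min_le_right _ _)))
    rw [Real.dist_eq, abs_sub_lt_iff] at hb1 hb2 hb3
    have := hstep k
    linarith [hb1.1, hb1.2, hb2.1, hb2.2, hb3.1, hb3.2]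
  -- summing up forces equality
  have hsumVf : (∑ j ∈ Finset.range p, Vf (PX ((j + 1) % p))) =
      ∑ j ∈ Finset.range p, Vf (PX j) := by
    obtain ⟨q, rfl⟩ : ∃ q, p = q + 1 := ⟨p - 1, by omega⟩
    rw [Finset.sum_range_succ, Finset.sum_range_succ' (fun j => Vf (PX j)) q,
      Nat.mod_self]
    congr 1
    apply Finset.sum_congr rfl
    intro j hj
    rw [Nat.mod_eq_of_lt (by have := Finset.mem_range.mp hj; omega)]
  have hsumℓ : (∑ j ∈ Finset.range p, ℓ (PX j, PU j)) = p * lp := by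
    rw [hlpdef]; unfold avgCost
    field_simp
  set g : ℕ → ℝ := fun j => Vf (PX j) - (Vf (PX ((j + 1) % p)) + ℓ (PX j, PU j) - lp)
    with hgdef
  have hgnn : ∀ j ∈ Finset.range p, 0 ≤ g j := by
    intro j hj
    have := key j (Finset.mem_range.mp hj)
    simp only [hgdef]; linarith
  have hgsum : ∑ j ∈ Finset.range p, g j = 0 := by
    simp only [hgdef]
    rw [Finset.sum_sub_distrib, Finset.sum_sub_distrib, Finset.sum_add_distrib,
      Finset.sum_const, Finset.card_range, nsmul_eq_mul, hsumVf, hsumℓ]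
    ring
  intro i hi
  have h0 := (Finset.sum_eq_zero_iff_of_nonneg hgnn).mp hgsum i (Finset.mem_range.mpr hi)
  simp only [hgdef] at h0
  rw [← hdyn i hi]
  linarith
end

section
/- (Upper bound on closed-loop cost) Let Assumptions A1 (continuity and compactness), A2 (strict dissipativity), A3 (terminal conditions), A5 (bound on V_N) and A6 (minimality of Π*) hold, and let ℓ_{Π*} = 0. Then the infinite-horizon closed-loop Cesàro cost satisfies J^cl_∞(x,μ_N) ≤ V_N(x) − V_{Π*} for all N ∈ N and all x ∈ X_N. -/
open Filter Topology

section AuxLemmas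
open Filter Topology

private lemma sum_rotate (p : ℕ) (h : ℕ → ℝ) :
    ∑ i ∈ Finset.range p, h ((i + 1) % p) = ∑ i ∈ Finset.range p, h (i % p) := by
  cases p with
  | zero => simp
  | succ q =>
    rw [Finset.sum_range_succ, Finset.sum_range_succ' (fun i => h (i % (q+1)))]
    simp [Nat.mod_self]

private lemma sum_shift (p : ℕ) (h : ℕ → ℝ) (m : ℕ) :
    ∑ i ∈ Finset.range p, h ((m + i) % p) = ∑ i ∈ Finset.range p, h (i % p) := by
  induction m with
  | zero => simp
  | succ m ih =>
    have key := sum_rotate p (fun i => h ((m + i) % p))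
    calc ∑ i ∈ Finset.range p, h ((m + 1 + i) % p)
        = ∑ i ∈ Finset.range p, h ((m + (i + 1) % p) % p) := by
          refine Finset.sum_congr rfl fun i _ => ?_
          congr 1
          rw [Nat.add_mod_mod]
          congr 1
          omega
      _ = ∑ i ∈ Finset.range p, h ((m + i % p) % p) := key
      _ = ∑ i ∈ Finset.range p, h ((m + i) % p) := by
          refine Finset.sum_congr rfl fun i _ => ?_
          congr 1
          rw [Nat.add_mod_mod]
      _ = ∑ i ∈ Finset.range p, h (i % p) := ih

private lemma sum_abel (a : ℕ → ℝ) (K : ℕ) :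
    ∑ n ∈ Finset.range K, (∑ k ∈ Finset.range (n+1), a k)
      = ∑ k ∈ Finset.range K, ((K : ℝ) - k) * a k := by
  induction K with
  | zero => simp
  | succ K ih =>
    rw [Finset.sum_range_succ, ih]
    conv_rhs => rw [Finset.sum_range_succ]
    rw [Finset.sum_range_succ a K, ← add_assoc, ← Finset.sum_add_distrib]
    push_cast
    congr 1
    · exact Finset.sum_congr rfl fun k _ => by ring
    · ring

private lemma kinf_nonneg {α : ℝ → ℝ} (h : IsKInf α) {t : ℝ} (ht : 0 ≤ t) : 0 ≤ α t := by
  rcases eq_or_lt_of_le ht with h0 | h0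
  · rw [← h0, h.2.2.1]
  · rw [← h.2.2.1]
    exact le_of_lt (h.2.1 Set.self_mem_Ici (Set.mem_Ici.2 ht) h0)

private lemma kinf_pos {α : ℝ → ℝ} (h : IsKInf α) {t : ℝ} (ht : 0 < t) : 0 < α t := by
  rw [← h.2.2.1]
  exact h.2.1 Set.self_mem_Ici (Set.mem_Ici.2 ht.le) ht

private lemma kinf_mono {α : ℝ → ℝ} (h : IsKInf α) {s t : ℝ} (hs : 0 ≤ s) (hst : s ≤ t) :
    α s ≤ α t :=
  h.2.1.monotoneOn (Set.mem_Ici.2 hs) (Set.mem_Ici.2 (hs.trans hst)) hst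

private lemma distOrbit_nonneg {E F : Type*} [NormedAddCommGroup E] [NormedAddCommGroup F]
    (p : ℕ) (P : ℕ → E × F) (z : E × F) : 0 ≤ distOrbit p P z :=
  Real.iInf_nonneg fun _ => norm_nonneg _

private lemma distOrbit_exists_min {E F : Type*} [NormedAddCommGroup E] [NormedAddCommGroup F]
    {p : ℕ} (hp : 0 < p) (P : ℕ → E × F) (z : E × F) :
    ∃ i : ℕ, i < p ∧ ‖z - P i‖ = distOrbit p P z := by
  haveI : Nonempty (Fin p) := ⟨⟨0, hp⟩⟩
  obtain ⟨i, hi⟩ := Finite.exists_min (fun i : Fin p => ‖z - P ↑i‖)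
  exact ⟨i, i.2, le_antisymm (le_ciInf hi) (ciInf_le (Finite.bddBelow_range _) i)⟩

private lemma phase_lock {E F : Type*} [NormedAddCommGroup E] [NormedAddCommGroup F]
    (X : Set E) (U : Set F) (f : E × F → E) (p : ℕ) (hp : 0 < p)
    (PX : ℕ → E) (PU : ℕ → F)
    (hfc : ContinuousOn f (X ×ˢ U))
    (hdyn : ∀ i < p, PX ((i + 1) % p) = f (PX i, PU i))
    (horbX : ∀ i < p, PX i ∈ X) (horbU : ∀ i < p, PU i ∈ U)
    (hinj : Set.InjOn PX (Set.Iio p))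
    (w : ℕ → E) (v : ℕ → F)
    (hw : ∀ n, w n ∈ X) (hv : ∀ n, v n ∈ U)
    (hstep : ∀ n, w (n + 1) = f (w n, v n))
    (hd : ∀ ε > 0, ∀ᶠ n in Filter.atTop,
      distOrbit p (fun i => (PX i, PU i)) (w n, v n) < ε) :
    ∃ j0 : ℕ, ∀ ε > 0, ∀ᶠ n in Filter.atTop, ‖w n - PX ((n + j0) % p)‖ ≤ ε := by
  classical
  -- separation of orbit points
  obtain ⟨sep, hsep0, hsep⟩ : ∃ sep > 0, ∀ i < p, ∀ j < p, i ≠ j → sep ≤ ‖PX i - PX j‖ := by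
    set S := (Finset.range p ×ˢ Finset.range p).filter (fun q : ℕ × ℕ => q.1 ≠ q.2) with hS
    by_cases hSne : S.Nonempty
    · refine ⟨S.inf' hSne (fun q => ‖PX q.1 - PX q.2‖), ?_, ?_⟩
      · obtain ⟨q, hqS, hq⟩ := Finset.exists_mem_eq_inf' hSne (fun q => ‖PX q.1 - PX q.2‖)
        rw [hq]
        simp only [hS, Finset.mem_filter, Finset.mem_product, Finset.mem_range] at hqS
        have hne : PX q.1 ≠ PX q.2 := fun hEq =>
          hqS.2 (hinj (Set.mem_Iio.2 hqS.1.1) (Set.mem_Iio.2 hqS.1.2) hEq)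
        exact norm_sub_pos_iff.mpr hne
      · intro i hi j hj hij
        refine Finset.inf'_le (fun q : ℕ × ℕ => ‖PX q.1 - PX q.2‖) (show (i, j) ∈ S from ?_)
        rw [hS, Finset.mem_filter, Finset.mem_product]
        exact ⟨⟨Finset.mem_range.2 hi, Finset.mem_range.2 hj⟩, hij⟩
    · refine ⟨1, one_pos, fun i hi j hj hij => absurd ?_ hSne⟩
      refine ⟨(i, j), show (i, j) ∈ S from ?_⟩
      rw [hS, Finset.mem_filter, Finset.mem_product]
      exact ⟨⟨Finset.mem_range.2 hi, Finset.mem_range.2 hj⟩, hij⟩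
  -- continuity deltas, uniform over the finitely many orbit points
  have hδ : ∀ ε > 0, ∃ δ > 0, ∀ i < p, ∀ z ∈ X ×ˢ U,
      ‖z - (PX i, PU i)‖ < δ → ‖f z - PX ((i + 1) % p)‖ < ε := by
    intro ε hε
    have key : ∀ i < p, ∃ δ > 0, ∀ z ∈ X ×ˢ U,
        ‖z - (PX i, PU i)‖ < δ → ‖f z - PX ((i + 1) % p)‖ < ε := by
      intro i hi
      have hmem : (PX i, PU i) ∈ X ×ˢ U := Set.mk_mem_prod (horbX i hi) (horbU i hi)
      have hcw := hfc _ hmem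
      rw [Metric.continuousWithinAt_iff] at hcw
      obtain ⟨δ, hδ0, hδ1⟩ := hcw ε hε
      refine ⟨δ, hδ0, fun z hz hlt => ?_⟩
      have h2 := hδ1 hz (by rwa [dist_eq_norm])
      rw [dist_eq_norm, ← hdyn i hi] at h2
      exact h2
    have comb : ∀ m, m ≤ p → ∃ δ > 0, ∀ i < m, ∀ z ∈ X ×ˢ U,
        ‖z - (PX i, PU i)‖ < δ → ‖f z - PX ((i + 1) % p)‖ < ε := by
      intro m
      induction m with
      | zero => exact fun _ => ⟨1, one_pos, fun i hi => by omega⟩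
      | succ m ih =>
        intro hm
        obtain ⟨δ1, hδ10, H1⟩ := ih (by omega)
        obtain ⟨δ2, hδ20, H2⟩ := key m (by omega)
        refine ⟨min δ1 δ2, lt_min hδ10 hδ20, fun i hi z hz hlt => ?_⟩
        rcases Nat.lt_succ_iff_lt_or_eq.mp hi with h | h
        · exact H1 i h z hz (hlt.trans_le (min_le_left _ _))
        · subst h
          exact H2 z hz (hlt.trans_le (min_le_right _ _))
    exact comb p le_rfl
  set η := sep / 4 with hη
  have hη0 : 0 < η := by positivity
  obtain ⟨δη, hδη0, hδη⟩ := hδ η hη0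
  have hδ00 : 0 < min δη η := lt_min hδη0 hη0
  obtain ⟨n0, hn0⟩ := Filter.eventually_atTop.mp (hd (min δη η) hδ00)
  obtain ⟨i0, hi0p, hi0⟩ := distOrbit_exists_min hp (fun i => (PX i, PU i)) (w n0, v n0)
  refine ⟨i0 + (p - n0 % p), ?_⟩
  set j0 := i0 + (p - n0 % p) with hj0
  have hc0 : (n0 + j0) % p = i0 := by
    have h1 : n0 % p < p := Nat.mod_lt _ hp
    have h2 : n0 + j0 = i0 + p * (n0 / p + 1) := by
      have h2a := Nat.mod_add_div n0 p
      have h2b : p * (n0 / p + 1) = p * (n0 / p) + p := by ring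
      omega
    rw [h2, Nat.add_mul_mod_self_left, Nat.mod_eq_of_lt hi0p]
  have hcsucc : ∀ n : ℕ, ((n + j0) % p + 1) % p = (n + 1 + j0) % p := by
    intro n
    rw [Nat.mod_add_mod]
    congr 1
    omega
  have hfst : ∀ n i, ‖w n - PX i‖ ≤ ‖(w n, v n) - (PX i, PU i)‖ := by
    intro n i
    have h1 : w n - PX i = ((w n, v n) - (PX i, PU i)).1 := rfl
    rw [h1]
    exact norm_fst_le _
  have key_step : ∀ (ε' δ' : ℝ), (∀ i < p, ∀ z ∈ X ×ˢ U,
        ‖z - (PX i, PU i)‖ < δ' → ‖f z - PX ((i + 1) % p)‖ < ε') →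
      ∀ n, distOrbit p (fun i => (PX i, PU i)) (w n, v n) < min δ' η →
      ‖w n - PX ((n + j0) % p)‖ ≤ η →
      ‖w (n + 1) - PX ((n + 1 + j0) % p)‖ < ε' := by
    intro ε' δ' hδ' n hdn hlock
    obtain ⟨i, hip, hieq⟩ := distOrbit_exists_min hp (fun i => (PX i, PU i)) (w n, v n)
    rw [← hieq] at hdn
    have hwn : ‖w n - PX i‖ ≤ η := (hfst n i).trans (hdn.le.trans (min_le_right _ _))
    have hic : i = (n + j0) % p := by
      by_contra hne
      have h2 : sep ≤ ‖PX i - PX ((n + j0) % p)‖ :=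
        hsep i hip _ (Nat.mod_lt _ hp) hne
      have h3 : ‖PX i - PX ((n + j0) % p)‖ ≤ ‖PX i - w n‖ + ‖w n - PX ((n + j0) % p)‖ := by
        have := dist_triangle (PX i) (w n) (PX ((n + j0) % p))
        rwa [dist_eq_norm, dist_eq_norm, dist_eq_norm] at this
      rw [norm_sub_rev (PX i) (w n)] at h3
      have h4 : sep ≤ η + η := h2.trans (h3.trans (add_le_add hwn hlock))
      rw [hη] at h4
      linarith
    have hmem : (w n, v n) ∈ X ×ˢ U := Set.mk_mem_prod (hw n) (hv n)
    have h4 := hδ' i hip _ hmem (hdn.trans_le (min_le_left _ _))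
    rw [hic, hcsucc n] at h4
    rw [hstep n]
    exact h4
  have lock : ∀ n, n0 ≤ n → ‖w n - PX ((n + j0) % p)‖ ≤ η := by
    intro n hn
    induction n, hn using Nat.le_induction with
    | base =>
      rw [hc0]
      calc ‖w n0 - PX i0‖ ≤ ‖(w n0, v n0) - (PX i0, PU i0)‖ := hfst n0 i0
        _ = distOrbit p (fun i => (PX i, PU i)) (w n0, v n0) := hi0
        _ ≤ η := ((hn0 n0 le_rfl).le.trans (min_le_right _ _))
    | succ n hn ih =>
      exact (key_step η δη hδη n (hn0 n hn) ih).le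
  intro ε hε
  have hε'0 : 0 < min ε η := lt_min hε hη0
  obtain ⟨δε, hδε0, hδε⟩ := hδ (min ε η) hε'0
  obtain ⟨n2, hn2⟩ := Filter.eventually_atTop.mp (hd (min δε (min δη η)) (lt_min hδε0 hδ00))
  rw [Filter.eventually_atTop]
  refine ⟨max n2 n0 + 1, fun n hn => ?_⟩
  obtain ⟨m, rfl⟩ : ∃ m, n = m + 1 := ⟨n - 1, by omega⟩
  have hm2 : n2 ≤ m := by omega
  have hm0 : n0 ≤ m := by omega
  have hdm : distOrbit p (fun i => (PX i, PU i)) (w m, v m) < min δε η :=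
    lt_of_lt_of_le (hn2 m hm2) (min_le_min le_rfl (min_le_right _ _))
  exact (key_step (min ε η) δε hδε m hdm (lock m hm0)).le.trans (min_le_left _ _)

end AuxLemmas


theorem stmt7
    (dn dm : ℕ)
    (X : Set (EuclideanSpace ℝ (Fin dn))) (U : Set (EuclideanSpace ℝ (Fin dm)))
    (f : EuclideanSpace ℝ (Fin dn) × EuclideanSpace ℝ (Fin dm) → EuclideanSpace ℝ (Fin dn))
    (ℓ : EuclideanSpace ℝ (Fin dn) × EuclideanSpace ℝ (Fin dm) → ℝ)
    (p : ℕ) (hp : 0 < p)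
    (PX : ℕ → EuclideanSpace ℝ (Fin dn)) (PU : ℕ → EuclideanSpace ℝ (Fin dm))
    (hopt : IsOptimalOrbit f X U ℓ p PX PU)
    -- A1 (continuity and compactness)
    (hcomp : IsCompact (X ×ˢ U))
    (hfc : ContinuousOn f (X ×ˢ U)) (hlc : ContinuousOn ℓ (X ×ˢ U))
    -- A2 (strict dissipativity)
    (lam : EuclideanSpace ℝ (Fin dn) → ℝ) (hlamc : ContinuousOn lam X)
    (αl : ℝ → ℝ) (hαl : IsKInf αl)
    (hdiss : ∀ x ∈ X, ∀ u ∈ U, f (x, u) ∈ X →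
      αl (distOrbit p (fun i => (PX i, PU i)) (x, u)) ≤
        rotCost f ℓ lam (avgCost ℓ p PX PU) (x, u))
    -- A3 (terminal conditions)
    (Xf : Set (EuclideanSpace ℝ (Fin dn))) (hXfc : IsCompact Xf) (hXfX : Xf ⊆ X)
    (hPXf : ∀ i < p, PX i ∈ Xf)
    (Vf : EuclideanSpace ℝ (Fin dn) → ℝ) (hVfc : ContinuousOn Vf Xf)
    (uf : EuclideanSpace ℝ (Fin dn) → EuclideanSpace ℝ (Fin dm))
    (hufU : ∀ x ∈ Xf, uf x ∈ U) (hufX : ∀ x ∈ Xf, f (x, uf x) ∈ X)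
    (hufXf : ∀ x ∈ Xf, f (x, uf x) ∈ Xf)
    (hufD : ∀ x ∈ Xf, Vf (f (x, uf x)) + ℓ (x, uf x) - avgCost ℓ p PX PU ≤ Vf x)
    -- A5 (bound on V_N)
    (γV : ℝ → ℝ) (hγV : IsKInf γV)
    (hA5 : ∀ N : ℕ, 0 < N → ∀ x ∈ XN f X U Xf N, ∀ i < p,
      ‖x - PX i‖ = distOrbitX p PX x →
      |VN f X U ℓ Vf Xf N x - VN f X U ℓ Vf Xf N (PX i)| ≤ γV (distOrbitX p PX x))
    -- A6 (minimality of the optimal orbit)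
    (hmin : Set.InjOn PX (Set.Iio p))
    -- normalization ℓ_{Π*} = 0
    (hzero : avgCost ℓ p PX PU = 0)
    -- EMPC feedback laws μ_N (first element of a minimizer), for every horizon N
    (μ : ℕ → EuclideanSpace ℝ (Fin dn) → EuclideanSpace ℝ (Fin dm))
    (hμ : ∀ N : ℕ, 0 < N → ∀ x ∈ XN f X U Xf N, ∃ u : ℕ → EuclideanSpace ℝ (Fin dm),
      FeasN f X U x N u ∧ traj f x u N ∈ Xf ∧
        JN f ℓ Vf x u N = VN f X U ℓ Vf Xf N x ∧ μ N x = u 0) :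
    ∀ N : ℕ, 0 < N → ∀ x ∈ XN f X U Xf N,
      JclInf f ℓ (μ N) x ≤ VN f X U ℓ Vf Xf N x - avgOrbit Vf p PX := by
  classical
  intro N hN x hxN
  obtain ⟨M, rfl⟩ : ∃ M, N = M + 1 := ⟨N - 1, by omega⟩
  -- orbit facts
  have horbX : ∀ i < p, PX i ∈ X := hopt.1.1
  have horbU : ∀ i < p, PU i ∈ U := hopt.1.2.1
  have hdyn : ∀ i < p, PX ((i + 1) % p) = f (PX i, PU i) := hopt.1.2.2
  -- trajectory unfolding
  have htrajS : ∀ (y : (EuclideanSpace ℝ (Fin dn))) (u : ℕ → (EuclideanSpace ℝ (Fin dm))) (k : ℕ), traj f y u (k+1) = f (traj f y u k, u k) :=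
    fun _ _ _ => rfl
  -- compactness and bounds
  have hXc : IsCompact X := by
    have hXeq : X = Prod.fst '' (X ×ˢ U) := by
      ext a
      constructor
      · intro ha
        exact ⟨(a, PU 0), Set.mk_mem_prod ha (horbU 0 hp), rfl⟩
      · rintro ⟨z, hz, rfl⟩
        exact hz.1
    rw [hXeq]
    exact hcomp.image continuous_fst
  obtain ⟨Mℓ, hMℓ⟩ := hcomp.exists_bound_of_continuousOn hlc
  obtain ⟨Mlam, hMlam'⟩ := hXc.exists_bound_of_continuousOn hlamc
  obtain ⟨MVf, hMVf'⟩ := hXfc.exists_bound_of_continuousOn hVfc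
  have hMlam : ∀ y ∈ X, |lam y| ≤ Mlam := by
    intro y hy
    have := hMlam' y hy
    rwa [Real.norm_eq_abs] at this
  have hMVf : ∀ y ∈ Xf, |Vf y| ≤ MVf := by
    intro y hy
    have := hMVf' y hy
    rwa [Real.norm_eq_abs] at this
  have hMlam0 : 0 ≤ Mlam := (abs_nonneg _).trans (hMlam _ (horbX 0 hp))
  -- rotated cost facts
  have hrot : ∀ (a : (EuclideanSpace ℝ (Fin dn))) (b : (EuclideanSpace ℝ (Fin dm))), a ∈ X → b ∈ U → f (a, b) ∈ X →
      αl (distOrbit p (fun i => (PX i, PU i)) (a, b)) ≤ rotCost f ℓ lam 0 (a, b) := by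
    intro a b ha hb hf
    have := hdiss a ha b hb hf
    rwa [hzero] at this
  have hrotnn : ∀ (a : (EuclideanSpace ℝ (Fin dn))) (b : (EuclideanSpace ℝ (Fin dm))), a ∈ X → b ∈ U → f (a, b) ∈ X →
      0 ≤ rotCost f ℓ lam 0 (a, b) :=
    fun a b ha hb hf => (kinf_nonneg hαl (distOrbit_nonneg _ _ _)).trans (hrot a b ha hb hf)
  -- rotation identity for stage cost sums
  have hJ1rot : ∀ (y : (EuclideanSpace ℝ (Fin dn))) (u : ℕ → (EuclideanSpace ℝ (Fin dm))) (K : ℕ),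
      J1 f ℓ y u K = (∑ k ∈ Finset.range K, rotCost f ℓ lam 0 (traj f y u k, u k))
        - lam y + lam (traj f y u K) := by
    intro y u K
    have hterm : ∀ k ∈ Finset.range K, rotCost f ℓ lam 0 (traj f y u k, u k)
        = ℓ (traj f y u k, u k) + (lam (traj f y u k) - lam (traj f y u (k+1))) := by
      intro k _
      rw [htrajS y u k]
      simp only [rotCost]
      ring
    rw [Finset.sum_congr rfl hterm, Finset.sum_add_distrib, Finset.sum_range_sub'
      (fun k => lam (traj f y u k)) K]
    have h0 : traj f y u 0 = y := rfl
    rw [h0]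
    simp only [J1]
    ring
  -- the "terminal controller flow" lemma
  have hB : ∀ z ∈ Xf,
      (1 / (p:ℝ)) * ∑ i ∈ Finset.range p, (Vf (PX i) + lam (PX i)) ≤ Vf z + lam z := by
    intro z hz
    set w : ℕ → EuclideanSpace ℝ (Fin dn) := trajCl f uf z with hwdef
    have hwXf : ∀ n, w n ∈ Xf := by
      intro n
      induction n with
      | zero => exact hz
      | succ n ih => exact hufXf _ ih
    have hwX : ∀ n, w n ∈ X := fun n => hXfX (hwXf n)
    have hvU : ∀ n, uf (w n) ∈ U := fun n => hufU _ (hwXf n)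
    have hwstep : ∀ n, w (n + 1) = f (w n, uf (w n)) := fun n => rfl
    set g : ℕ → ℝ := fun n => Vf (w n) + lam (w n) with hgdef
    have hdec : ∀ n, g (n+1) + rotCost f ℓ lam 0 (w n, uf (w n)) ≤ g n := by
      intro n
      have h1 := hufD (w n) (hwXf n)
      rw [hzero] at h1
      have h2 : rotCost f ℓ lam 0 (w n, uf (w n))
          = ℓ (w n, uf (w n)) + lam (w n) - lam (w (n+1)) := by
        rw [hwstep n]
        simp only [rotCost]
        ring
      simp only [hgdef]
      rw [h2]
      have h3 : Vf (w (n+1)) + ℓ (w n, uf (w n)) ≤ Vf (w n) := by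
        rw [hwstep n]
        linarith [h1]
      linarith
    have hrotn : ∀ n, αl (distOrbit p (fun i => (PX i, PU i)) (w n, uf (w n)))
        ≤ rotCost f ℓ lam 0 (w n, uf (w n)) :=
      fun n => hrot _ _ (hwX n) (hvU n) (by rw [← hwstep n]; exact hwX (n+1))
    have hrotnn' : ∀ n, 0 ≤ rotCost f ℓ lam 0 (w n, uf (w n)) :=
      fun n => (kinf_nonneg hαl (distOrbit_nonneg _ _ _)).trans (hrotn n)
    have hanti : Antitone g := antitone_nat_of_succ_le fun n => by
      have := hdec n; have := hrotnn' n; linarith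
    have hbddg : BddBelow (Set.range g) := by
      refine ⟨-(MVf + Mlam), ?_⟩
      rintro _ ⟨n, rfl⟩
      have h1 := hMVf _ (hwXf n)
      have h2 := hMlam _ (hwX n)
      simp only [hgdef]
      have := abs_le.mp h1
      have := abs_le.mp h2
      linarith [(abs_le.mp h1).1, (abs_le.mp h2).1]
    have hgL := tendsto_atTop_ciInf hanti hbddg
    set L : ℝ := ⨅ n, g n with hL
    have hrot0 : Filter.Tendsto (fun n => rotCost f ℓ lam 0 (w n, uf (w n)))
        Filter.atTop (𝓝 0) := by
      apply squeeze_zero hrotnn' (fun n => by have := hdec n; linarith :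
        ∀ n, rotCost f ℓ lam 0 (w n, uf (w n)) ≤ g n - g (n+1))
      have h4 : Filter.Tendsto (fun n => g (n+1)) Filter.atTop (𝓝 L) :=
        hgL.comp (Filter.tendsto_add_atTop_nat 1)
      have := hgL.sub h4
      simpa using this
    have hdtend : ∀ ε > 0, ∀ᶠ n in Filter.atTop,
        distOrbit p (fun i => (PX i, PU i)) (w n, uf (w n)) < ε := by
      intro ε hε
      have hαε := kinf_pos hαl hε
      filter_upwards [hrot0.eventually (gt_mem_nhds hαε)] with n hn
      by_contra hge
      push_neg at hge
      have h5 := kinf_mono hαl hε.le hge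
      have h6 := hrotn n
      linarith
    obtain ⟨j0, hph⟩ := phase_lock X U f p hp PX PU hfc hdyn horbX horbU hmin
      w (fun n => uf (w n)) hwX hvU hwstep hdtend
    have hres : ∀ r < p, Vf (PX r) + lam (PX r) = L := by
      intro r hr
      set nk : ℕ → ℕ := fun k => p * k + ((r + p - j0 % p) % p) with hnk
      have hnkc : ∀ k, (nk k + j0) % p = r := by
        intro k
        have h1 : j0 % p < p := Nat.mod_lt _ hp
        have h3 : nk k + j0 = ((r + p - j0 % p) % p + j0) + p * k := by
          simp only [hnk]; ring
        rw [h3, Nat.add_mul_mod_self_left, ← Nat.add_mod_mod, Nat.mod_add_mod]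
        have h4 : r + p - j0 % p + j0 % p = r + p := by omega
        rw [h4, Nat.add_mod_right, Nat.mod_eq_of_lt hr]
      have hklenk : ∀ k, k ≤ nk k := by
        intro k
        simp only [hnk]
        calc k ≤ p * k := Nat.le_mul_of_pos_left k hp
          _ ≤ p * k + _ := Nat.le_add_right _ _
      have hnktop : Filter.Tendsto nk Filter.atTop Filter.atTop :=
        Filter.tendsto_atTop_mono hklenk Filter.tendsto_id
      have htend : Filter.Tendsto (fun k => w (nk k)) Filter.atTop (𝓝 (PX r)) := by
        rw [Metric.tendsto_atTop]
        intro ε hε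
        obtain ⟨n1, hn1⟩ := Filter.eventually_atTop.mp (hph (ε/2) (by linarith))
        refine ⟨n1, fun k hk => ?_⟩
        have h7 := hn1 (nk k) (hk.trans (hklenk k))
        rw [hnkc k] at h7
        rw [dist_eq_norm]
        linarith
      have hcontVfl : ContinuousWithinAt (fun y => Vf y + lam y) Xf (PX r) :=
        (hVfc _ (hPXf r hr)).add ((hlamc _ (horbX r hr)).mono hXfX)
      have htendw : Filter.Tendsto (fun k => w (nk k)) Filter.atTop (𝓝[Xf] (PX r)) := by
        rw [tendsto_nhdsWithin_iff]
        exact ⟨htend, Filter.Eventually.of_forall fun k => hwXf (nk k)⟩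
      have h6 : Filter.Tendsto (fun k => g (nk k)) Filter.atTop
          (𝓝 (Vf (PX r) + lam (PX r))) := hcontVfl.tendsto.comp htendw
      have h7 : Filter.Tendsto (fun k => g (nk k)) Filter.atTop (𝓝 L) :=
        hgL.comp hnktop
      exact tendsto_nhds_unique h6 h7
    have hsum : ∑ i ∈ Finset.range p, (Vf (PX i) + lam (PX i)) = (p:ℝ) * L := by
      rw [Finset.sum_congr rfl fun i hi => hres i (Finset.mem_range.mp hi)]
      rw [Finset.sum_const, Finset.card_range, nsmul_eq_mul]
    rw [hsum]
    have hp0 : (p:ℝ) ≠ 0 := Nat.cast_ne_zero.mpr hp.ne'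
    have hLle : L ≤ g 0 := ciInf_le hbddg 0
    have hg0 : g 0 = Vf z + lam z := rfl
    calc (1 / (p:ℝ)) * ((p:ℝ) * L) = L := by field_simp
      _ ≤ g 0 := hLle
      _ = Vf z + lam z := hg0
  -- lower bound on the value function
  have hbddJN : ∀ x' : (EuclideanSpace ℝ (Fin dn)), BddBelow ((fun u => JN f ℓ Vf x' u (M+1)) ''
      {u : ℕ → (EuclideanSpace ℝ (Fin dm)) | FeasN f X U x' (M+1) u ∧ traj f x' u (M+1) ∈ Xf}) := by
    intro x'
    refine ⟨-(((M:ℝ)+1) * Mℓ + MVf), ?_⟩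
    rintro r ⟨u, ⟨⟨huU, huX⟩, huXf⟩, rfl⟩
    have h1 : ∀ k ∈ Finset.range (M+1), -Mℓ ≤ ℓ (traj f x' u k, u k) := by
      intro k hk
      have hk' := Finset.mem_range.mp hk
      have := hMℓ _ (Set.mk_mem_prod (huX k (by omega)) (huU k hk'))
      rw [Real.norm_eq_abs] at this
      linarith [(abs_le.mp this).1]
    have h2 : -(((M:ℝ)+1) * Mℓ) ≤ J1 f ℓ x' u (M+1) := by
      simp only [J1]
      calc -(((M:ℝ)+1) * Mℓ) = ∑ _k ∈ Finset.range (M+1), (-Mℓ) := by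
            rw [Finset.sum_const, Finset.card_range, nsmul_eq_mul]
            push_cast
            ring
        _ ≤ _ := Finset.sum_le_sum h1
    have h3 : -MVf ≤ Vf (traj f x' u (M+1)) := by
      have := hMVf _ huXf
      linarith [(abs_le.mp this).1]
    simp only [JN]
    linarith
  have hVlb : ∀ y ∈ XN f X U Xf (M+1),
      (1 / (p:ℝ)) * ∑ i ∈ Finset.range p, (Vf (PX i) + lam (PX i)) - lam y
        ≤ VN f X U ℓ Vf Xf (M+1) y := by
    intro y hy
    obtain ⟨u, hfeas, hterm, hval, -⟩ := hμ (M+1) (Nat.succ_pos M) y hy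
    rw [← hval]
    have hrotsum : 0 ≤ ∑ k ∈ Finset.range (M+1), rotCost f ℓ lam 0 (traj f y u k, u k) := by
      refine Finset.sum_nonneg fun k hk => ?_
      have hk' := Finset.mem_range.mp hk
      refine hrotnn _ _ (hfeas.2 k (by omega)) (hfeas.1 k hk') ?_
      rw [← htrajS y u k]
      exact hfeas.2 (k+1) (by omega)
    have hJ := hJ1rot y u (M+1)
    have hBy := hB _ hterm
    simp only [JN]
    rw [hJ]
    linarith
  -- the fundamental MPC recursion
  have hrec : ∀ y ∈ XN f X U Xf (M+1),
      f (y, μ (M+1) y) ∈ XN f X U Xf (M+1) ∧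
      VN f X U ℓ Vf Xf (M+1) (f (y, μ (M+1) y))
        ≤ VN f X U ℓ Vf Xf (M+1) y - ℓ (y, μ (M+1) y) ∧
      μ (M+1) y ∈ U ∧ y ∈ X ∧ f (y, μ (M+1) y) ∈ X := by
    intro y hy
    obtain ⟨u, hfeas, hterm, hval, hu0⟩ := hμ (M+1) (Nat.succ_pos M) y hy
    set yT := traj f y u (M+1) with hyT
    set y1 := f (y, μ (M+1) y) with hy1
    have hy1' : y1 = traj f y u 1 := by
      rw [hy1, hu0]
      rfl
    set u' : ℕ → EuclideanSpace ℝ (Fin dm) := fun k => if k < M then u (k+1) else uf yT with hu'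
    have htr : ∀ k ≤ M, traj f y1 u' k = traj f y u (k+1) := by
      intro k hk
      induction k with
      | zero => exact hy1'
      | succ k ih =>
        have hk' : k ≤ M := by omega
        have hstep1 : traj f y1 u' (k+1) = f (traj f y1 u' k, u' k) := rfl
        rw [hstep1, ih hk']
        have hku : u' k = u (k+1) := if_pos (by omega)
        rw [hku]
        rfl
    have htrM1 : traj f y1 u' (M+1) = f (yT, uf yT) := by
      have hstep1 : traj f y1 u' (M+1) = f (traj f y1 u' M, u' M) := rfl
      rw [hstep1, htr M le_rfl]
      have hMu : u' M = uf yT := if_neg (lt_irrefl M)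
      rw [hMu, hyT]
    have hfeas' : FeasN f X U y1 (M+1) u' ∧ traj f y1 u' (M+1) ∈ Xf := by
      refine ⟨⟨?_, ?_⟩, ?_⟩
      · intro k hk
        by_cases h : k < M
        · simp only [hu']
          rw [if_pos h]
          exact hfeas.1 (k+1) (by omega)
        · simp only [hu']
          rw [if_neg h]
          exact hufU _ hterm
      · intro k hk
        by_cases h : k ≤ M
        · rw [htr k h]
          exact hfeas.2 (k+1) (by omega)
        · have hkM : k = M + 1 := by omega
          rw [hkM, htrM1]
          exact hXfX (hufXf _ hterm)
      · rw [htrM1]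
        exact hufXf _ hterm
    have hcost : JN f ℓ Vf y1 u' (M+1) ≤ VN f X U ℓ Vf Xf (M+1) y - ℓ (y, μ (M+1) y) := by
      rw [← hval]
      have hJsplit : J1 f ℓ y1 u' (M+1)
          = (∑ k ∈ Finset.range M, ℓ (traj f y u (k+1), u (k+1))) + ℓ (yT, uf yT) := by
        simp only [J1]
        rw [Finset.sum_range_succ]
        congr 1
        · refine Finset.sum_congr rfl fun k hk => ?_
          have hkM := Finset.mem_range.mp hk
          have hku : u' k = u (k+1) := if_pos hkM
          rw [htr k hkM.le, hku]
        · have hMu : u' M = uf yT := if_neg (lt_irrefl M)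
          rw [htr M le_rfl, hMu, ← hyT]
      have hJ1' : J1 f ℓ y u (M+1)
          = ℓ (y, u 0) + ∑ k ∈ Finset.range M, ℓ (traj f y u (k+1), u (k+1)) := by
        simp only [J1]
        rw [Finset.sum_range_succ' (fun k => ℓ (traj f y u k, u k)) M, add_comm]
        rfl
      have hufD' := hufD yT hterm
      rw [hzero] at hufD'
      simp only [JN]
      rw [hJsplit, htrM1, hJ1', hu0]
      linarith
    have hy1XN : y1 ∈ XN f X U Xf (M+1) := ⟨u', hfeas'⟩
    have hVle : VN f X U ℓ Vf Xf (M+1) y1 ≤ JN f ℓ Vf y1 u' (M+1) :=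
      csInf_le (hbddJN y1) ⟨u', hfeas', rfl⟩
    refine ⟨hy1XN, hVle.trans hcost, ?_, hfeas.2 0 (by omega), ?_⟩
    · rw [hu0]
      exact hfeas.1 0 (Nat.succ_pos M)
    · rw [hy1']
      exact hfeas.2 1 (by omega)
  -- closed-loop trajectory
  set s : ℕ → EuclideanSpace ℝ (Fin dn) := trajCl f (μ (M+1)) x with hs
  have hsstep : ∀ n, s (n+1) = f (s n, μ (M+1) (s n)) := fun n => rfl
  have hsXN : ∀ n, s n ∈ XN f X U Xf (M+1) := by
    intro n
    induction n with
    | zero => exact hxN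
    | succ n ih =>
      rw [hsstep n]
      exact (hrec (s n) ih).1
  have hsX : ∀ n, s n ∈ X := fun n => (hrec (s n) (hsXN n)).2.2.2.1
  have hsU : ∀ n, μ (M+1) (s n) ∈ U := fun n => (hrec (s n) (hsXN n)).2.2.1
  have hs1X : ∀ n, f (s n, μ (M+1) (s n)) ∈ X := fun n => (hrec (s n) (hsXN n)).2.2.2.2
  set Vs : ℕ → ℝ := fun n => VN f X U ℓ Vf Xf (M+1) (s n) with hVsdef
  set ls : ℕ → ℝ := fun n => ℓ (s n, μ (M+1) (s n)) with hlsdef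
  set rs : ℕ → ℝ := fun n => rotCost f ℓ lam 0 (s n, μ (M+1) (s n)) with hrsdef
  have hVdec : ∀ n, Vs (n+1) ≤ Vs n - ls n := by
    intro n
    have h1 := (hrec (s n) (hsXN n)).2.1
    simp only [hVsdef, hlsdef]
    rw [hsstep n]
    exact h1
  have hrsl : ∀ n, αl (distOrbit p (fun i => (PX i, PU i)) (s n, μ (M+1) (s n))) ≤ rs n :=
    fun n => hrot _ _ (hsX n) (hsU n) (hs1X n)
  have hrsnn : ∀ n, 0 ≤ rs n :=
    fun n => (kinf_nonneg hαl (distOrbit_nonneg _ _ _)).trans (hrsl n)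
  have hrs_eq : ∀ n, rs n = ls n + lam (s n) - lam (s (n+1)) := by
    intro n
    simp only [hrsdef, hlsdef]
    rw [hsstep n]
    simp only [rotCost]
    ring
  set A : ℝ := (1 / (p:ℝ)) * ∑ i ∈ Finset.range p, (Vf (PX i) + lam (PX i)) with hA
  set Vt : ℕ → ℝ := fun n => Vs n + lam (s n) with hVt
  have hVtlb : ∀ n, A ≤ Vt n := by
    intro n
    have h1 := hVlb (s n) (hsXN n)
    simp only [hVt, hVsdef]
    linarith
  have hVt_dec : ∀ n, Vt (n+1) ≤ Vt n - rs n := by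
    intro n
    simp only [hVt]
    have h1 := hVdec n
    have h2 := hrs_eq n
    linarith
  have hVtanti : Antitone Vt := antitone_nat_of_succ_le fun n => by
    have h1 := hVt_dec n
    have h2 := hrsnn n
    linarith
  have hbddVt : BddBelow (Set.range Vt) := ⟨A, by rintro _ ⟨n, rfl⟩; exact hVtlb n⟩
  have hVtL := tendsto_atTop_ciInf hVtanti hbddVt
  have hrs0 : Filter.Tendsto rs Filter.atTop (𝓝 0) := by
    apply squeeze_zero hrsnn (fun n => by have := hVt_dec n; linarith :
      ∀ n, rs n ≤ Vt n - Vt (n+1))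
    have h4 : Filter.Tendsto (fun n => Vt (n+1)) Filter.atTop (𝓝 (⨅ n, Vt n)) :=
      hVtL.comp (Filter.tendsto_add_atTop_nat 1)
    have h5 := hVtL.sub h4
    simpa using h5
  have hdtend : ∀ ε > 0, ∀ᶠ n in Filter.atTop,
      distOrbit p (fun i => (PX i, PU i)) (s n, μ (M+1) (s n)) < ε := by
    intro ε hε
    have hαε := kinf_pos hαl hε
    filter_upwards [hrs0.eventually (gt_mem_nhds hαε)] with n hn
    by_contra hge
    push_neg at hge
    have h5 := kinf_mono hαl hε.le hge
    have h6 := hrsl n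
    linarith
  obtain ⟨j0, hph⟩ := phase_lock X U f p hp PX PU hfc hdyn horbX horbU hmin
    s (fun n => μ (M+1) (s n)) hsX hsU hsstep hdtend
  -- telescoping bounds
  have hS_le : ∀ K, ∑ k ∈ Finset.range K, ls k ≤ Vs 0 - Vs K := by
    intro K
    induction K with
    | zero => simp
    | succ K ih =>
      rw [Finset.sum_range_succ]
      have h1 := hVdec K
      linarith
  have hS_ge : ∀ K, lam (s K) - lam (s 0) ≤ ∑ k ∈ Finset.range K, ls k := by
    intro K
    have h1 : ∑ k ∈ Finset.range K, ls k
        = ∑ k ∈ Finset.range K, rs k + (lam (s K) - lam (s 0)) := by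
      have h2 : ∀ k ∈ Finset.range K, ls k = rs k + (lam (s (k+1)) - lam (s k)) := by
        intro k _
        have := hrs_eq k
        linarith
      rw [Finset.sum_congr rfl h2, Finset.sum_add_distrib,
        Finset.sum_range_sub (fun k => lam (s k)) K]
    rw [h1]
    have h3 : 0 ≤ ∑ k ∈ Finset.range K, rs k := Finset.sum_nonneg fun k _ => hrsnn k
    linarith
  -- Cesàro identity and bounds
  have hJclid : ∀ K : ℕ, 0 < K → JclK f ℓ (μ (M+1)) x K
      = (1/(K:ℝ)) * ∑ n ∈ Finset.range K, (∑ k ∈ Finset.range (n+1), ls k) := by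
    intro K hK
    have hK0 : (K:ℝ) ≠ 0 := Nat.cast_ne_zero.mpr hK.ne'
    rw [sum_abel ls K]
    simp only [JclK]
    rw [Finset.mul_sum]
    refine Finset.sum_congr rfl fun k hk => ?_
    rw [← hs]
    simp only [hlsdef]
    field_simp
    try ring
  have hJcl_le : ∀ K : ℕ, 0 < K → JclK f ℓ (μ (M+1)) x K
      ≤ Vs 0 - (1/(K:ℝ)) * ∑ n ∈ Finset.range K, Vs (n+1) := by
    intro K hK
    have hKR : (0:ℝ) < K := by exact_mod_cast hK
    rw [hJclid K hK]
    have h1 : ∑ n ∈ Finset.range K, (∑ k ∈ Finset.range (n+1), ls k)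
        ≤ ∑ n ∈ Finset.range K, (Vs 0 - Vs (n+1)) :=
      Finset.sum_le_sum fun n _ => hS_le (n+1)
    have h3 : ∑ n ∈ Finset.range K, (Vs 0 - Vs (n+1))
        = (K:ℝ) * Vs 0 - ∑ n ∈ Finset.range K, Vs (n+1) := by
      rw [Finset.sum_sub_distrib, Finset.sum_const, Finset.card_range, nsmul_eq_mul]
    have h2 : (1/(K:ℝ)) * ∑ n ∈ Finset.range K, (∑ k ∈ Finset.range (n+1), ls k)
        ≤ (1/(K:ℝ)) * ((K:ℝ) * Vs 0 - ∑ n ∈ Finset.range K, Vs (n+1)) := by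
      rw [← h3]
      exact mul_le_mul_of_nonneg_left h1 (by positivity)
    have hK0 : (K:ℝ) ≠ 0 := ne_of_gt hKR
    have h4 : (1/(K:ℝ)) * ((K:ℝ) * Vs 0 - ∑ n ∈ Finset.range K, Vs (n+1))
        = Vs 0 - (1/(K:ℝ)) * ∑ n ∈ Finset.range K, Vs (n+1) := by
      field_simp
      try ring
    rw [h4] at h2
    exact h2
  have hJcl_ge : ∀ K : ℕ, 0 < K → -(2*Mlam) ≤ JclK f ℓ (μ (M+1)) x K := by
    intro K hK
    have hKR : (0:ℝ) < K := by exact_mod_cast hK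
    rw [hJclid K hK]
    have h1 : ∀ n ∈ Finset.range K, -(2*Mlam) ≤ ∑ k ∈ Finset.range (n+1), ls k := by
      intro n _
      have h2 := hS_ge (n+1)
      have ha := abs_le.mp (hMlam _ (hsX (n+1)))
      have hb := abs_le.mp (hMlam _ (hsX 0))
      linarith
    have h2 : (-(2*Mlam)) * K ≤ ∑ n ∈ Finset.range K, (∑ k ∈ Finset.range (n+1), ls k) := by
      calc (-(2*Mlam)) * K = ∑ _n ∈ Finset.range K, (-(2*Mlam)) := by
            rw [Finset.sum_const, Finset.card_range, nsmul_eq_mul]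
            ring
        _ ≤ _ := Finset.sum_le_sum h1
    have h3 := mul_le_mul_of_nonneg_left h2 (le_of_lt (by positivity : (0:ℝ) < 1/(K:ℝ)))
    have h4 : (1/(K:ℝ)) * ((-(2*Mlam)) * K) = -(2*Mlam) := by
      field_simp
    rw [h4] at h3
    exact h3
  -- periodic averaging of the storage function along the orbit
  set Lam : ℝ := (1/(p:ℝ)) * ∑ i ∈ Finset.range p, lam (PX i) with hLam
  have hp0 : (p:ℝ) ≠ 0 := Nat.cast_ne_zero.mpr hp.ne'
  obtain ⟨C, hC⟩ : ∃ C, ∀ K : ℕ,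
      ∑ n ∈ Finset.range K, lam (PX ((n + 1 + j0) % p)) ≤ (K:ℝ) * Lam + C := by
    have hpL : (p:ℝ) * Lam = ∑ i ∈ Finset.range p, lam (PX i) := by
      rw [hLam]
      field_simp
    set G : ℕ → ℝ := fun n => lam (PX ((n + 1 + j0) % p)) with hG
    set D : ℕ → ℝ := fun K => (∑ n ∈ Finset.range K, G n) - K * Lam with hD
    have hDper : ∀ K, D (K + p) = D K := by
      intro K
      have h1 : ∑ n ∈ Finset.range (K+p), G n
          = ∑ n ∈ Finset.range K, G n + ∑ i ∈ Finset.range p, G (K + i) :=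
        Finset.sum_range_add G K p
      have h2 : ∑ i ∈ Finset.range p, G (K + i) = ∑ i ∈ Finset.range p, lam (PX i) := by
        calc ∑ i ∈ Finset.range p, G (K + i)
            = ∑ i ∈ Finset.range p, lam (PX (((K + 1 + j0) + i) % p)) := by
              refine Finset.sum_congr rfl fun i _ => ?_
              simp only [hG]
              rw [show K + i + 1 + j0 = K + 1 + j0 + i from by omega]
          _ = ∑ i ∈ Finset.range p, lam (PX (i % p)) :=
              sum_shift p (fun j => lam (PX j)) (K+1+j0)
          _ = ∑ i ∈ Finset.range p, lam (PX i) := by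
              refine Finset.sum_congr rfl fun i hi => ?_
              rw [Nat.mod_eq_of_lt (Finset.mem_range.mp hi)]
      simp only [hD]
      rw [h1, h2, ← hpL]
      push_cast
      ring
    have hDmod : ∀ K, D K = D (K % p) := by
      intro K
      have hqr : ∀ q r, D (r + p * q) = D r := by
        intro q
        induction q with
        | zero => intro r; simp
        | succ q ih =>
          intro r
          have hrw : r + p * (q+1) = (r + p * q) + p := by ring
          rw [hrw, hDper, ih]
      conv_lhs => rw [show K = K % p + p * (K / p) from (Nat.mod_add_div K p).symm]
      exact hqr (K/p) (K%p)
    refine ⟨∑ r ∈ Finset.range p, |D r|, fun K => ?_⟩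
    have h5 : D K ≤ |D (K % p)| := by
      rw [hDmod K]
      exact le_abs_self _
    have h6 : |D (K % p)| ≤ ∑ r ∈ Finset.range p, |D r| :=
      Finset.single_le_sum (f := fun r => |D r|) (fun r _ => abs_nonneg _)
        (Finset.mem_range.2 (Nat.mod_lt K hp))
    have h7 := h5.trans h6
    simp only [hD] at h7
    linarith
  -- A - Lam is the orbit average of Vf
  have hALam : A - Lam = avgOrbit Vf p PX := by
    rw [hA, hLam, avgOrbit, Finset.sum_add_distrib]
    ring
  -- uniform continuity of the storage function
  have hunif := hXc.uniformContinuousOn_of_continuous hlamc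
  rw [Metric.uniformContinuousOn_iff] at hunif
  -- final assembly
  have hJclInf : JclInf f ℓ (μ (M+1)) x
      = Filter.limsup (fun K => JclK f ℓ (μ (M+1)) x K) Filter.atTop := rfl
  refine le_of_forall_pos_le_add fun ε hε => ?_
  have hε2 : 0 < ε/2 := by linarith
  have hε4 : 0 < ε/4 := by linarith
  obtain ⟨δu, hδu0, hδu⟩ := hunif (ε/4) hε4
  obtain ⟨m1, hm1⟩ := Filter.eventually_atTop.mp (hph (δu/2) (by linarith))
  have hclose : ∀ n, m1 ≤ n → |lam (s n) - lam (PX ((n + j0) % p))| ≤ ε/4 := by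
    intro n hn
    have h1 := hm1 n hn
    have hdist : dist (s n) (PX ((n + j0) % p)) < δu := by
      rw [dist_eq_norm]
      linarith
    have h2 := hδu (s n) (hsX n) _ (horbX _ (Nat.mod_lt _ hp)) hdist
    rw [Real.dist_eq] at h2
    exact h2.le
  have hEsum : ∀ K : ℕ, ∑ n ∈ Finset.range K, lam (s (n+1))
      ≤ (K:ℝ) * Lam + C + (m1 : ℝ) * (2*Mlam) + (K:ℝ) * (ε/4) := by
    intro K
    have h1 : ∀ n ∈ Finset.range K, lam (s (n+1))
        ≤ lam (PX ((n + 1 + j0) % p)) + ((ε/4) + (if n < m1 then 2*Mlam else 0)) := by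
      intro n _
      by_cases h : m1 ≤ n + 1
      · have h2 := abs_le.mp (hclose (n+1) h)
        have hite : (0:ℝ) ≤ (if n < m1 then 2*Mlam else 0) := by
          by_cases hn : n < m1
          · rw [if_pos hn]; linarith
          · rw [if_neg hn]
        linarith
      · have hn : n < m1 := by omega
        rw [if_pos hn]
        have ha := abs_le.mp (hMlam _ (hsX (n+1)))
        have hb := abs_le.mp (hMlam (PX ((n + 1 + j0) % p))
          (horbX _ (Nat.mod_lt (n + 1 + j0) hp)))
        linarith
    have h2 := Finset.sum_le_sum h1
    have h3 : ∑ n ∈ Finset.range K,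
        (lam (PX ((n + 1 + j0) % p)) + ((ε/4) + (if n < m1 then 2*Mlam else 0)))
        = (∑ n ∈ Finset.range K, lam (PX ((n + 1 + j0) % p))) + (K:ℝ)*(ε/4)
          + ∑ n ∈ Finset.range K, (if n < m1 then 2*Mlam else (0:ℝ)) := by
      rw [Finset.sum_add_distrib, Finset.sum_add_distrib, Finset.sum_const,
        Finset.card_range, nsmul_eq_mul]
      ring
    have h4 : ∑ n ∈ Finset.range K, (if n < m1 then 2*Mlam else (0:ℝ)) ≤ (m1:ℝ) * (2*Mlam) := by
      have h5 : ∑ n ∈ Finset.range K, (if n < m1 then 2*Mlam else (0:ℝ))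
          = ∑ n ∈ Finset.range (min K m1), (if n < m1 then 2*Mlam else (0:ℝ)) := by
        refine (Finset.sum_subset (Finset.range_subset_range.2 (min_le_left K m1)) ?_).symm
        intro n hn hnn
        rw [Finset.mem_range] at hn
        rw [Finset.mem_range, not_lt] at hnn
        rw [if_neg (by omega)]
      have h6 : ∑ n ∈ Finset.range (min K m1), (if n < m1 then 2*Mlam else (0:ℝ))
          = ((min K m1 : ℕ):ℝ) * (2*Mlam) := by
        rw [Finset.sum_congr rfl fun n hn =>
          if_pos (by have := Finset.mem_range.mp hn; omega : n < m1)]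
        rw [Finset.sum_const, Finset.card_range, nsmul_eq_mul]
      have h7 : ((min K m1 : ℕ):ℝ) ≤ (m1:ℝ) := by exact_mod_cast min_le_right K m1
      rw [h5, h6]
      have h8 : (0:ℝ) ≤ 2*Mlam := by linarith
      nlinarith
    have h9 := hC K
    rw [h3] at h2
    linarith
  set C' : ℝ := C + (m1:ℝ) * (2*Mlam) with hC'
  have htail : ∀ᶠ K : ℕ in Filter.atTop, C' / (K:ℝ) < ε/4 :=
    (tendsto_const_div_atTop_nhds_zero_nat C').eventually (gt_mem_nhds hε4)
  have hmain : ∀ᶠ K : ℕ in Filter.atTop,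
      JclK f ℓ (μ (M+1)) x K ≤ (VN f X U ℓ Vf Xf (M+1) x - avgOrbit Vf p PX) + ε := by
    filter_upwards [htail, Filter.eventually_gt_atTop 0] with K hK1 hK2
    have hKR : (0:ℝ) < K := by exact_mod_cast hK2
    have h1 := hJcl_le K hK2
    have h2 : ∀ n ∈ Finset.range K, A - lam (s (n+1)) ≤ Vs (n+1) := by
      intro n _
      have h3 := hVlb (s (n+1)) (hsXN (n+1))
      simp only [hVsdef]
      exact h3
    have h3 : (K:ℝ) * A - ∑ n ∈ Finset.range K, lam (s (n+1))
        ≤ ∑ n ∈ Finset.range K, Vs (n+1) := by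
      have h4 := Finset.sum_le_sum h2
      rw [Finset.sum_sub_distrib, Finset.sum_const, Finset.card_range, nsmul_eq_mul] at h4
      linarith
    have h4 := hEsum K
    have h5 : (K:ℝ) * A - ((K:ℝ)*Lam + C' + (K:ℝ)*(ε/4))
        ≤ ∑ n ∈ Finset.range K, Vs (n+1) := by
      rw [hC']
      linarith
    have hinv : (0:ℝ) < 1/(K:ℝ) := by positivity
    have h7 := mul_le_mul_of_nonneg_left h5 hinv.le
    have h8 : (1/(K:ℝ)) * ((K:ℝ) * A - ((K:ℝ)*Lam + C' + (K:ℝ)*(ε/4)))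
        = A - Lam - C'/(K:ℝ) - ε/4 := by
      field_simp
      ring
    rw [h8] at h7
    have hVs0 : Vs 0 = VN f X U ℓ Vf Xf (M+1) x := rfl
    rw [← hALam, ← hVs0]
    linarith
  have hbound : Filter.IsBoundedUnder (· ≥ ·) Filter.atTop
      (fun K => JclK f ℓ (μ (M+1)) x K) := by
    refine ⟨-(2*Mlam), ?_⟩
    rw [Filter.eventually_map]
    filter_upwards [Filter.eventually_gt_atTop 0] with K hK
    exact hJcl_ge K hK
  rw [hJclInf]
  exact Filter.limsup_le_of_le hbound.isCoboundedUnder_flip hmain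
end
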